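/- arXiv:2605.08026 — 5 statements merged into one kernel-verified Lean document; each statement's English description precedes it below -/
import Mathlib

section
/- Let F : ℝ^n → ℝ^ℓ be locally Lipschitz continuous and directionally differentiable, let Γ ⊂ ℝ^ℓ be closed, and set Z := {(x, δ) ∈ ℝ^n × ℝ^ℓ : F(x) − δ ∈ Γ}. Then for each (x, δ) ∈ Z one has N_Z((x, δ)) ⊂ {(ξ, −λ) ∈ ℝ^n × ℝ^ℓ : ξ ∈ ∂⟨λ, F⟩(x), λ ∈ N_Γ(F(x) − δ)}. -/
open Filter Topology Metric Set
open scoped RealInnerProductSpace Pointwise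

noncomputable section

/-- Euclidean space `ℝ^n`. -/
abbrev Eu (n : ℕ) := EuclideanSpace ℝ (Fin n)

section Cones

variable {H : Type*} [NormedAddCommGroup H] [InnerProductSpace ℝ H]

/-- Tangent (Bouligand) cone to `Ω` at `x` (empty if `x ∉ Ω`). -/
def tanCone (Ω : Set H) (x : H) : Set H :=
  {d | x ∈ Ω ∧ ∃ (dk : ℕ → H) (tk : ℕ → ℝ),
    Tendsto dk atTop (𝓝 d) ∧ (∀ k, 0 < tk k) ∧ Tendsto tk atTop (𝓝 0) ∧
    ∀ k, x + tk k • dk k ∈ Ω}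

/-- Polar cone of a set. -/
def polarCone (C : Set H) : Set H := {y | ∀ x ∈ C, ⟪x, y⟫ ≤ 0}

/-- Regular (Fréchet) normal cone: polar of the tangent cone (empty if `x ∉ Ω`). -/
def regNormal (Ω : Set H) (x : H) : Set H :=
  {η | x ∈ Ω ∧ η ∈ polarCone (tanCone Ω x)}

/-- Limiting (Mordukhovich) normal cone (empty if `x ∉ Ω`). -/
def limNormal (Ω : Set H) (x : H) : Set H :=
  {η | x ∈ Ω ∧ ∃ (xk ηk : ℕ → H),
    Tendsto xk atTop (𝓝 x) ∧ Tendsto ηk atTop (𝓝 η) ∧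
    ∀ k, ηk k ∈ regNormal Ω (xk k)}

/-- Directional limiting normal cone to `Ω` at `x` in direction `d`. -/
def dirLimNormal (Ω : Set H) (x d : H) : Set H :=
  {η | x ∈ Ω ∧ ∃ (dk : ℕ → H) (tk : ℕ → ℝ) (ηk : ℕ → H),
    Tendsto dk atTop (𝓝 d) ∧ (∀ k, 0 < tk k) ∧ Tendsto tk atTop (𝓝 0) ∧
    Tendsto ηk atTop (𝓝 η) ∧
    ∀ k, ηk k ∈ regNormal Ω (x + tk k • dk k)}

/-- The pair `(ξ, r)` as an element of the ℓ²-product `H ×₂ ℝ`. -/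
def pl2 (ξ : H) (r : ℝ) : WithLp 2 (H × ℝ) := (WithLp.equiv 2 (H × ℝ)).symm (ξ, r)

/-- Epigraph of `φ` as a subset of the ℓ²-product `H ×₂ ℝ`. -/
def epigraphSet (φ : H → ℝ) : Set (WithLp 2 (H × ℝ)) :=
  {p | φ ((WithLp.equiv 2 (H × ℝ)) p).1 ≤ ((WithLp.equiv 2 (H × ℝ)) p).2}

/-- Limiting subdifferential of `φ` at `x`. -/
def limSubdiff (φ : H → ℝ) (x : H) : Set H :=
  {ξ | pl2 ξ (-1) ∈ limNormal (epigraphSet φ) (pl2 x (φ x))}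

/-- Directional limiting subdifferential of `φ` at `x` in direction `d`, where `φd`
denotes the directional derivative `φ'(x; d)`. -/
def dirLimSubdiff (φ : H → ℝ) (x d : H) (φd : ℝ) : Set H :=
  {ξ | pl2 ξ (-1) ∈ dirLimNormal (epigraphSet φ) (pl2 x (φ x)) (pl2 d φd)}

/-- Directional neighborhood `B_{ε,δ}(d)`. -/
def dirNbhd (d : H) (ε δ : ℝ) : Set H :=
  {y | ‖y‖ ≤ ε ∧ ‖‖d‖ • y - ‖y‖ • d‖ ≤ δ * (‖y‖ * ‖d‖)}

end Cones

section Problem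

variable {n l : ℕ}

/-- `F' x d` is the directional derivative of `F` at `x` in direction `d`. -/
def IsDirDeriv (F : Eu n → Eu l) (F' : Eu n → Eu n → Eu l) : Prop :=
  ∀ x d : Eu n,
    Tendsto (fun t : ℝ => t⁻¹ • (F (x + t • d) - F x)) (𝓝[>] (0:ℝ)) (𝓝 (F' x d))

/-- Limiting subdifferential of the scalarization `⟨λ, F⟩` at `x`. -/
def scalSubdiff (F : Eu n → Eu l) (lam : Eu l) (x : Eu n) : Set (Eu n) :=
  limSubdiff (fun y => ⟪lam, F y⟫) x

/-- Directional limiting subdifferential of `⟨λ, F⟩` at `x` in direction `d`. -/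
def scalDirSubdiff (F : Eu n → Eu l) (F' : Eu n → Eu n → Eu l) (lam : Eu l)
    (x d : Eu n) : Set (Eu n) :=
  dirLimSubdiff (fun y => ⟪lam, F y⟫) x d ⟪lam, F' x d⟫

/-- Linearization cone. -/
def linCone (F : Eu n → Eu l) (F' : Eu n → Eu n → Eu l) (Γ : Set (Eu l)) (x : Eu n) :
    Set (Eu n) :=
  {d | F' x d ∈ tanCone Γ (F x)}

/-- Explicit critical cone `C(x̄)`. -/
def critCone (f : Eu n → ℝ) (F : Eu n → Eu l) (F' : Eu n → Eu n → Eu l)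
    (Γ : Set (Eu l)) (x : Eu n) : Set (Eu n) :=
  {d | ⟪gradient f x, d⟫ ≤ 0 ∧ d ∈ linCone F F' Γ x}

/-- Implicit critical cone `Ĉ(x̄)`. -/
def implCritCone (f : Eu n → ℝ) (F : Eu n → Eu l) (Γ : Set (Eu l)) (x : Eu n) :
    Set (Eu n) :=
  {d | ⟪gradient f x, d⟫ ≤ 0 ∧ d ∈ tanCone (F ⁻¹' Γ) x}

/-- M-stationarity. -/
def MStat (f : Eu n → ℝ) (F : Eu n → Eu l) (Γ : Set (Eu l)) (x : Eu n) : Prop :=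
  ∃ lam : Eu l, -gradient f x ∈ scalSubdiff F lam x ∧ lam ∈ limNormal Γ (F x)

/-- M-stationarity in direction `d`. -/
def MStatDir (f : Eu n → ℝ) (F : Eu n → Eu l) (F' : Eu n → Eu n → Eu l)
    (Γ : Set (Eu l)) (x d : Eu n) : Prop :=
  ∃ lam : Eu l, -gradient f x ∈ scalDirSubdiff F F' lam x d ∧
    lam ∈ dirLimNormal Γ (F x) (F' x d)

/-- Metric subregularity constraint qualification in direction `d`. -/
def MSCQdir (F : Eu n → Eu l) (Γ : Set (Eu l)) (x d : Eu n) : Prop :=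
  ∃ ε > (0:ℝ), ∃ δ > (0:ℝ), ∃ κ > (0:ℝ), ∀ y : Eu n, y - x ∈ dirNbhd d ε δ →
    infDist y (F ⁻¹' Γ) ≤ κ * infDist (F y) Γ

/-- Metric subregularity constraint qualification. -/
def MSCQ (F : Eu n → Eu l) (Γ : Set (Eu l)) (x : Eu n) : Prop := MSCQdir F Γ x 0

/-- AM-stationary sequence w.r.t. `x`. -/
def AMSeq (f : Eu n → ℝ) (F : Eu n → Eu l) (Γ : Set (Eu l)) (x : Eu n)
    (xk : ℕ → Eu n) (lamk δk : ℕ → Eu l) (εk : ℕ → Eu n) : Prop :=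
  (∀ k, εk k - gradient f (xk k) ∈ scalSubdiff F (lamk k) (xk k)) ∧
  (∀ k, lamk k ∈ limNormal Γ (F (xk k) - δk k)) ∧
  Tendsto xk atTop (𝓝 x) ∧ Tendsto δk atTop (𝓝 0) ∧ Tendsto εk atTop (𝓝 0)

/-- AM-stationarity. -/
def AMStat (f : Eu n → ℝ) (F : Eu n → Eu l) (Γ : Set (Eu l)) (x : Eu n) : Prop :=
  ∃ xk lamk δk εk, AMSeq f F Γ x xk lamk δk εk

/-- AM-stationary sequence w.r.t. `x` in direction `d`. -/
def AMSeqDir (f : Eu n → ℝ) (F : Eu n → Eu l) (Γ : Set (Eu l)) (x : Eu n)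
    (xk : ℕ → Eu n) (lamk δk : ℕ → Eu l) (εk : ℕ → Eu n) (d : Eu n) : Prop :=
  AMSeq f F Γ x xk lamk δk εk ∧
  (∀ k, xk k ≠ x) ∧
  Tendsto (fun k => ‖xk k - x‖⁻¹ • (xk k - x)) atTop (𝓝 d) ∧
  Tendsto (fun k => ‖xk k - x‖⁻¹ • δk k) atTop (𝓝 (0 : Eu l)) ∧
  (∃ θ : ℕ → ℝ, (∀ k, 0 ≤ θ k) ∧ Tendsto θ atTop (𝓝 0) ∧
    ∀ k, ‖‖δk k‖ • lamk k - ‖lamk k‖ • δk k‖ ≤ ‖δk k‖ * ‖lamk k‖ * θ k) ∧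
  (∃ M : ℝ, ∀ k, ‖δk k‖ * ‖lamk k‖ / ‖xk k - x‖ ≤ M)

/-- AM-stationarity in direction `d`. -/
def AMStatDir (f : Eu n → ℝ) (F : Eu n → Eu l) (Γ : Set (Eu l)) (x d : Eu n) : Prop :=
  ∃ xk lamk δk εk, AMSeqDir f F Γ x xk lamk δk εk d

/-- The Minkowski sum `Σ_i |λ_i| ∂(sgn(λ_i) F_i)(x; d)`. -/
def dirSumSet (F : Eu n → Eu l) (F' : Eu n → Eu n → Eu l) (lam : Eu l) (x d : Eu n) :
    Set (Eu n) :=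
  {v | ∃ s : Fin l → Eu n,
    (∀ i, s i ∈ |lam i| • dirLimSubdiff (fun y => Real.sign (lam i) * F y i) x d
        (Real.sign (lam i) * F' x d i)) ∧
    v = ∑ i, s i}

/-- Standing sum-rule assumption. -/
def SumRule (F : Eu n → Eu l) (F' : Eu n → Eu n → Eu l) : Prop :=
  ∀ (x d : Eu n) (lam : Eu l), scalDirSubdiff F F' lam x d = dirSumSet F F' lam x d

end Problem

/-!
Let `(ξₖ, μₖ) → (ξ, -λ)` be regular normals to `Z` at `(xₖ, δₖ) → (x, δ)`. Testing `(ξₖ, μₖ)`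
against the tangent directions `(0, -w)`, `w` tangent to `Γ`, gives `-μₖ ∈ N̂_Γ(F xₖ - δₖ)`, hence
`λ ∈ N_Γ(F x - δ)` in the limit. Testing it against `(u, F'(xₖ; u))`, along which `F x - δ` stays
constant, gives the Dini inequality `⟨ξₖ, u⟩ ≤ ⟨λ, F'(xₖ; u)⟩ + cₖ ‖u‖` with
`cₖ = ‖μₖ + λ‖ · Lip F → 0`. For a locally Lipschitz, directionally differentiable `φ`, such an
approximate Dini subgradient is a lower slope of `φ` on a small ball (Hadamard differentiability
and compactness of the unit sphere); minimizing `φ - ⟨ξₖ, ·⟩ + κ ‖· - xₖ‖²` over that ball produces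
a nearby point with an exact Dini subgradient `ζₖ ≈ ξₖ`, and `(ζₖ, -1)` is a regular normal to the
epigraph. Hence `ξ ∈ ∂⟨λ, F⟩(x)`.
-/

section DirDeriv

variable {E G : Type*} [NormedAddCommGroup E] [NormedSpace ℝ E]
  [NormedAddCommGroup G] [NormedSpace ℝ G]

def HasDirDerivAt (f : E → G) (f' : E → G) (y : E) : Prop :=
  ∀ d, Tendsto (fun t : ℝ => t⁻¹ • (f (y + t • d) - f y)) (𝓝[>] 0) (𝓝 (f' d))

lemma tendsto_add_smul_nhdsGT (y d : E) :
    Tendsto (fun t : ℝ => y + t • d) (𝓝[>] 0) (𝓝 y) := by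
  have h : Continuous fun t : ℝ => y + t • d := by fun_prop
  simpa using (h.tendsto 0).mono_left nhdsWithin_le_nhds

lemma HasDirDerivAt.norm_le {f : E → G} {f' : E → G} {y : E} (hf : HasDirDerivAt f f' y)
    {K : NNReal} {s : Set E} (hs : s ∈ 𝓝 y) (hK : LipschitzOnWith K f s) (d : E) :
    ‖f' d‖ ≤ K * ‖d‖ := by
  refine le_of_tendsto (hf d).norm ?_
  filter_upwards [tendsto_add_smul_nhdsGT y d hs, self_mem_nhdsWithin] with t hts (ht : 0 < t)
  calc ‖t⁻¹ • (f (y + t • d) - f y)‖ = t⁻¹ * ‖f (y + t • d) - f y‖ := by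
        rw [norm_smul, Real.norm_of_nonneg (inv_nonneg.2 ht.le)]
    _ ≤ t⁻¹ * (K * ‖t • d‖) := by
        gcongr
        simpa using hK.norm_sub_le hts (mem_of_mem_nhds hs)
    _ = K * ‖d‖ := by
        rw [norm_smul, Real.norm_of_nonneg ht.le]
        field_simp

lemma HasDirDerivAt.tendsto_of_lipschitzOnWith {f : E → G} {f' : E → G} {y : E}
    (hf : HasDirDerivAt f f' y) {K : NNReal} {s : Set E} (hs : s ∈ 𝓝 y)
    (hK : LipschitzOnWith K f s) {ι : Type*} {l : Filter ι} {t : ι → ℝ} {u : ι → E} {d : E}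
    (ht : Tendsto t l (𝓝[>] 0)) (hu : Tendsto u l (𝓝 d)) :
    Tendsto (fun j => (t j)⁻¹ • (f (y + t j • u j) - f y)) l (𝓝 (f' d)) := by
  have ht0 : Tendsto t l (𝓝 0) := tendsto_nhds_of_tendsto_nhdsWithin ht
  have hnear : Tendsto (fun j => y + t j • u j) l (𝓝 y) := by
    simpa using tendsto_const_nhds.add (ht0.smul hu)
  have herr : Tendsto (fun j => (t j)⁻¹ • (f (y + t j • u j) - f (y + t j • d))) l (𝓝 0) := by
    have hbound : Tendsto (fun j => (K : ℝ) * ‖u j - d‖) l (𝓝 0) := by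
      simpa using (tendsto_iff_norm_sub_tendsto_zero.1 hu).const_mul (K : ℝ)
    refine squeeze_zero_norm' ?_ hbound
    filter_upwards [hnear hs, (tendsto_add_smul_nhdsGT y d).comp ht hs,
      tendsto_nhdsWithin_iff.1 ht |>.2] with j h1 h2 (hpos : 0 < t j)
    calc ‖(t j)⁻¹ • (f (y + t j • u j) - f (y + t j • d))‖
        = (t j)⁻¹ * ‖f (y + t j • u j) - f (y + t j • d)‖ := by
          rw [norm_smul, Real.norm_of_nonneg (inv_nonneg.2 hpos.le)]
      _ ≤ (t j)⁻¹ * (K * ‖t j • (u j - d)‖) := by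
          gcongr
          simpa [smul_sub] using hK.norm_sub_le h1 h2
      _ = K * ‖u j - d‖ := by
          rw [norm_smul, Real.norm_of_nonneg hpos.le]
          field_simp
  simpa [smul_sub] using ((hf d).comp ht).add herr

lemma HasDirDerivAt.nonneg_of_isLocalMin {f : E → ℝ} {f' : E → ℝ} {z : E}
    (hf : HasDirDerivAt f f' z) (hmin : IsLocalMin f z) (d : E) : 0 ≤ f' d := by
  refine ge_of_tendsto (hf d) ?_
  filter_upwards [tendsto_add_smul_nhdsGT z d hmin, self_mem_nhdsWithin] with t hmin_t (ht : 0 < t)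
  exact smul_nonneg (inv_nonneg.2 ht.le) (sub_nonneg.2 hmin_t)

lemma HasDirDerivAt.add {f g : E → G} {f' g' : E → G} {z : E} (hf : HasDirDerivAt f f' z)
    (hg : HasDirDerivAt g g' z) : HasDirDerivAt (f + g) (f' + g') z := fun d => by
  simpa [smul_add, add_sub_add_comm] using (hf d).add (hg d)

lemma HasFDerivAt.hasDirDerivAt {f : E → G} {f' : E →L[ℝ] G} {z : E} (hf : HasFDerivAt f f' z) :
    HasDirDerivAt f f' z := fun d => by
  have h : HasDerivAt (fun t : ℝ => f (z + t • d)) (f' d) 0 := by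
    have hline : HasDerivAt (fun t : ℝ => z + t • d) d 0 := by
      simpa using ((hasDerivAt_id (0 : ℝ)).smul_const d).const_add z
    exact (by simpa using hf : HasFDerivAt f f' (z + (0 : ℝ) • d)).comp_hasDerivAt 0 hline
  simpa using h.tendsto_slope_zero_right

end DirDeriv

lemma HasDirDerivAt.inner_left {E G : Type*} [NormedAddCommGroup E] [NormedSpace ℝ E]
    [NormedAddCommGroup G] [InnerProductSpace ℝ G] {F F' : E → G} {y : E}
    (hF : HasDirDerivAt F F' y) (lam : G) :
    HasDirDerivAt (fun z => ⟪lam, F z⟫) (fun d => ⟪lam, F' d⟫) y := fun d => by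
  convert ((innerSL ℝ lam).continuous.tendsto (F' d)).comp (hF d) using 2 <;>
    simp [inner_sub_right, real_inner_smul_right]

lemma tendsto_pl2 {E ι : Type*} [NormedAddCommGroup E] {l : Filter ι} {a : ι → E} {b : ι → ℝ}
    {x : E} {r : ℝ} (ha : Tendsto a l (𝓝 x)) (hb : Tendsto b l (𝓝 r)) :
    Tendsto (fun k => pl2 (a k) (b k)) l (𝓝 (pl2 x r)) :=
  ((WithLp.prod_continuous_toLp 2 E ℝ).tendsto _).comp (ha.prodMk_nhds hb)

section Epigraph

variable {E : Type*} [NormedAddCommGroup E] [InnerProductSpace ℝ E]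

lemma HasDirDerivAt.pl2_mem_regNormal_epigraphSet {φ φ' : E → ℝ} {z ζ : E}
    (hφ : HasDirDerivAt φ φ' z) {K : NNReal} {s : Set E} (hs : s ∈ 𝓝 z)
    (hK : LipschitzOnWith K φ s) (hdini : ∀ d, ⟪ζ, d⟫ ≤ φ' d) :
    pl2 ζ (-1) ∈ regNormal (epigraphSet φ) (pl2 z (φ z)) := by
  refine ⟨le_refl (φ z), ?_⟩
  rintro w ⟨-, dk, tk, hdk, htpos, ht0, hmem⟩
  have ht : Tendsto tk atTop (𝓝[>] 0) :=
    tendsto_nhdsWithin_iff.2 ⟨ht0, Eventually.of_forall htpos⟩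
  have hquot : ∀ k, (tk k)⁻¹ • (φ (z + tk k • (dk k).fst) - φ z) ≤ (dk k).snd := fun k => by
    have h : φ (z + tk k • (dk k).fst) ≤ φ z + tk k * (dk k).snd := hmem k
    rw [smul_eq_mul, inv_mul_le_iff₀ (htpos k)]
    linarith
  have hle : φ' w.fst ≤ w.snd :=
    le_of_tendsto_of_tendsto' (hφ.tendsto_of_lipschitzOnWith hs hK ht
      (((WithLp.continuous_fst 2 E ℝ).tendsto w).comp hdk))
      (((WithLp.continuous_snd 2 E ℝ).tendsto w).comp hdk)
      hquot
  have hinner : ⟪w, pl2 ζ (-1)⟫ = ⟪ζ, w.fst⟫ - w.snd := by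
    simp [pl2, real_inner_comm, sub_eq_add_neg]
  rw [hinner]
  linarith [hdini w.fst]

variable [ProperSpace E]

lemma HasDirDerivAt.eventually_le_of_dini {φ φ' : E → ℝ} {y ξ : E} {c ε : ℝ}
    (hφ : HasDirDerivAt φ φ' y) {K : NNReal} {s : Set E} (hs : s ∈ 𝓝 y)
    (hK : LipschitzOnWith K φ s) (hdini : ∀ d, ⟪ξ, d⟫ ≤ φ' d + c * ‖d‖) (hε : 0 < ε) :
    ∀ᶠ u in 𝓝 y, φ y + ⟪ξ, u - y⟫ - (c + ε) * ‖u - y‖ ≤ φ u := by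
  by_contra h
  obtain ⟨u, hu, hbad⟩ := exists_seq_forall_of_frequently (not_eventually.1 h)
  simp only [not_le] at hbad
  have hpos : ∀ j, 0 < ‖u j - y‖ := fun j => norm_sub_pos_iff.2 fun hj => by
    simpa [hj] using hbad j
  set t := fun j => ‖u j - y‖
  have hd : ∀ j, (t j)⁻¹ • (u j - y) ∈ sphere (0 : E) 1 := fun j => by
    simp [t, norm_smul, (hpos j).ne']
  obtain ⟨e, he, σ, hσ, hconv⟩ := (isCompact_sphere (0 : E) 1).tendsto_subseq hd
  have ht : Tendsto (t ∘ σ) atTop (𝓝[>] 0) := by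
    refine tendsto_nhdsWithin_iff.2 ⟨?_, Eventually.of_forall fun j => hpos (σ j)⟩
    exact (tendsto_iff_norm_sub_tendsto_zero.1 hu).comp hσ.tendsto_atTop
  have hlim := hφ.tendsto_of_lipschitzOnWith hs hK ht hconv
  have hquot : ∀ j, (t j)⁻¹ • (φ (y + t j • ((t j)⁻¹ • (u j - y))) - φ y)
      ≤ ⟪ξ, (t j)⁻¹ • (u j - y)⟫ - (c + ε) := fun j => by
    rw [smul_inv_smul₀ (hpos j).ne', add_sub_cancel, smul_eq_mul, inv_mul_le_iff₀ (hpos j),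
      real_inner_smul_right, mul_sub, ← mul_assoc, mul_inv_cancel₀ (hpos j).ne', one_mul]
    linarith [hbad j]
  have hle : φ' e ≤ ⟪ξ, e⟫ - (c + ε) :=
    le_of_tendsto_of_tendsto' hlim
      ((((innerSL ℝ ξ).continuous.tendsto e).comp hconv).sub_const _) fun j => hquot (σ j)
  have hdini_e := hdini e
  rw [mem_sphere_zero_iff_norm.1 he, mul_one] at hdini_e
  linarith

lemma exists_dini_subgradient_near {φ : E → ℝ} {φ' : E → E → ℝ} {y ξ : E} {c ν : ℝ}
    (hc : 0 < c) (hν : 0 < ν) (hcont : ContinuousOn φ (closedBall y ν))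
    (hφ' : ∀ z, HasDirDerivAt φ (φ' z) z)
    (hlow : ∀ u ∈ closedBall y ν, φ y + ⟪ξ, u - y⟫ - c * ‖u - y‖ ≤ φ u) :
    ∃ z ζ, ‖z - y‖ ≤ ν ∧ ‖ζ - ξ‖ ≤ 2 * c ∧ ∀ d, ⟪ζ, d⟫ ≤ φ' z d := by
  set κ := 2 * c / ν
  have hκ : κ * (ν / 2) = c := by simp only [κ]; field_simp
  have hκpos : 0 < κ := by positivity
  set q : E → ℝ := fun v => κ * ‖v - y‖ ^ 2 - ⟪ξ, v⟫
  obtain ⟨z, hz, hmin⟩ := (isCompact_closedBall y ν).exists_isMinOn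
    (nonempty_closedBall.2 hν.le) (hcont.add (by fun_prop : Continuous q).continuousOn)
  -- the penalty `κ ‖v - y‖²` beats the slope `c` outside `closedBall y (ν / 2)`
  have hzy : ‖z - y‖ ≤ ν / 2 := by
    have h1 : φ z + q z ≤ φ y + q y := hmin (mem_closedBall_self hν.le)
    have h2 := hlow z hz
    have hsq : κ * ‖z - y‖ ^ 2 ≤ c * ‖z - y‖ := by
      simp only [q, sub_self, norm_zero, inner_sub_right] at h1 h2
      linarith
    by_contra! hfar
    have : c * ‖z - y‖ < κ * ‖z - y‖ * ‖z - y‖ := by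
      rw [← hκ]; gcongr; linarith
    nlinarith
  have hloc : IsLocalMin (φ + q) z :=
    hmin.isLocalMin (closedBall_mem_nhds_of_mem (by rw [mem_ball, dist_eq_norm]; linarith))
  have hq := ((((hasFDerivAt_id z).sub_const y).norm_sq).const_mul κ).sub
    (innerSL ℝ ξ).hasFDerivAt
  refine ⟨z, ξ - (2 * κ) • (z - y), by linarith, ?_, fun d => ?_⟩
  · rw [sub_sub_cancel_left, norm_neg, norm_smul, Real.norm_of_nonneg (by positivity)]
    nlinarith [hκ]
  · have h : 0 ≤ φ' z d + (κ * (2 * ⟪z - y, d⟫) - ⟪ξ, d⟫) := by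
      simpa [inner_sub_left] using ((hφ' z).add hq.hasDirDerivAt).nonneg_of_isLocalMin hloc d
    rw [inner_sub_left, real_inner_smul_left]
    linarith

lemma exists_regNormal_epigraphSet_near {φ : E → ℝ} {φ' : E → E → ℝ} (hφ : LocallyLipschitz φ)
    (hφ' : ∀ z, HasDirDerivAt φ (φ' z) z) {y ξ : E} {c ε : ℝ} (hc : 0 ≤ c) (hε : 0 < ε)
    (hdini : ∀ d, ⟪ξ, d⟫ ≤ φ' y d + c * ‖d‖) :
    ∃ z ζ, ‖z - y‖ ≤ ε ∧ ‖ζ - ξ‖ ≤ 2 * (c + ε) ∧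
      pl2 ζ (-1) ∈ regNormal (epigraphSet φ) (pl2 z (φ z)) := by
  obtain ⟨K, s, hs, hK⟩ := hφ y
  obtain ⟨ν, hν, hlow⟩ := nhds_basis_closedBall.eventually_iff.1
    ((hφ' y).eventually_le_of_dini hs hK hdini hε)
  obtain ⟨z, ζ, hz, hζ, hζdini⟩ := exists_dini_subgradient_near (by linarith) (lt_min hν hε)
    hφ.continuous.continuousOn hφ'
    fun u hu => hlow (closedBall_subset_closedBall (min_le_left _ _) hu)
  obtain ⟨K', s', hs', hK'⟩ := hφ z
  exact ⟨z, ζ, hz.trans (min_le_right _ _), hζ,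
    (hφ' z).pl2_mem_regNormal_epigraphSet hs' hK' hζdini⟩

lemma mem_limSubdiff_of_tendsto_dini {φ : E → ℝ} {φ' : E → E → ℝ} (hφ : LocallyLipschitz φ)
    (hφ' : ∀ z, HasDirDerivAt φ (φ' z) z) {x ξ : E} {y ξk : ℕ → E} {c : ℕ → ℝ}
    (hy : Tendsto y atTop (𝓝 x)) (hξ : Tendsto ξk atTop (𝓝 ξ)) (hc : Tendsto c atTop (𝓝 0))
    (hc0 : ∀ k, 0 ≤ c k) (hdini : ∀ᶠ k in atTop, ∀ d, ⟪ξk k, d⟫ ≤ φ' (y k) d + c k * ‖d‖) :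
    ξ ∈ limSubdiff φ x := by
  obtain ⟨N, hN⟩ := eventually_atTop.1 hdini
  have key : ∀ m : ℕ, ∃ z ζ, ‖z - y (m + N)‖ ≤ 1 / ((m : ℝ) + 1) ∧
      ‖ζ - ξk (m + N)‖ ≤ 2 * (c (m + N) + 1 / ((m : ℝ) + 1)) ∧
      pl2 ζ (-1) ∈ regNormal (epigraphSet φ) (pl2 z (φ z)) := fun m =>
    exists_regNormal_epigraphSet_near hφ hφ' (hc0 _) (by positivity) (hN _ (by omega))
  choose z ζ hz hζ hreg using key
  have hshift := tendsto_add_atTop_nat N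
  have hm : Tendsto (fun m : ℕ => 1 / ((m : ℝ) + 1)) atTop (𝓝 0) :=
    tendsto_one_div_add_atTop_nhds_zero_nat
  have hzx : Tendsto z atTop (𝓝 x) := (hy.comp hshift).congr_dist <|
    squeeze_zero (fun _ => dist_nonneg) (fun m => (dist_eq_norm' _ _).trans_le (hz m)) hm
  have hζξ : Tendsto ζ atTop (𝓝 ξ) := (hξ.comp hshift).congr_dist <|
    squeeze_zero (fun _ => dist_nonneg) (fun m => (dist_eq_norm' _ _).trans_le (hζ m))
      (by simpa using ((hc.comp hshift).add hm).const_mul 2)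
  exact ⟨le_refl (φ x), fun m => pl2 (z m) (φ (z m)), fun m => pl2 (ζ m) (-1),
    tendsto_pl2 hzx ((hφ.continuous.tendsto x).comp hzx), tendsto_pl2 hζξ tendsto_const_nhds, hreg⟩

end Epigraph

section PerturbedSet

variable {E G : Type*} [NormedAddCommGroup E] [InnerProductSpace ℝ E]
  [NormedAddCommGroup G] [InnerProductSpace ℝ G]

lemma mem_tanCone_of_tendsto {Ω : Set E} {x d : E} {g : ℝ → E} (hx : x ∈ Ω)
    (hg : Tendsto g (𝓝[>] 0) (𝓝 d)) (hmem : ∀ t > 0, x + t • g t ∈ Ω) : d ∈ tanCone Ω x := by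
  have hpos : ∀ k : ℕ, 0 < 1 / ((k : ℝ) + 1) := fun k => by positivity
  have ht : Tendsto (fun k : ℕ => 1 / ((k : ℝ) + 1)) atTop (𝓝[>] 0) :=
    tendsto_nhdsWithin_iff.2 ⟨tendsto_one_div_add_atTop_nhds_zero_nat, Eventually.of_forall hpos⟩
  exact ⟨hx, fun k => g (1 / ((k : ℝ) + 1)), fun k => 1 / ((k : ℝ) + 1), hg.comp ht, hpos,
    tendsto_nhds_of_tendsto_nhdsWithin ht, fun k => hmem _ (hpos k)⟩

variable {F : E → G} {Γ : Set G} {p η : WithLp 2 (E × G)}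

lemma inner_fst_le_of_mem_regNormal {F' : E → G}
    (hη : η ∈ regNormal {q : WithLp 2 (E × G) | F q.fst - q.snd ∈ Γ} p)
    (hF : HasDirDerivAt F F' p.fst) (u : E) : ⟪η.fst, u⟫ ≤ ⟪-η.snd, F' u⟫ := by
  -- moving `x` along `u` and `δ` along the difference quotient of `F` keeps `F x - δ` fixed
  have htan : WithLp.toLp 2 (u, F' u) ∈ tanCone {q : WithLp 2 (E × G) | F q.fst - q.snd ∈ Γ} p := by
    refine mem_tanCone_of_tendsto hη.1
      (g := fun t => WithLp.toLp 2 (u, t⁻¹ • (F (p.fst + t • u) - F p.fst))) ?_ fun t ht => ?_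
    · exact ((WithLp.prod_continuous_toLp 2 E G).tendsto _).comp
        (tendsto_const_nhds.prodMk_nhds (hF u))
    · have hp : F p.fst - p.snd ∈ Γ := hη.1
      simp only [mem_ofPred_eq, WithLp.add_fst, WithLp.add_snd, WithLp.smul_fst,
        WithLp.smul_snd, WithLp.toLp_fst, WithLp.toLp_snd, smul_inv_smul₀ ht.ne']
      convert hp using 1
      abel
  have h := hη.2 _ htan
  simp only [WithLp.prod_inner_apply, WithLp.ofLp_fst, WithLp.ofLp_snd] at h
  rw [real_inner_comm η.fst, real_inner_comm η.snd] at h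
  rw [inner_neg_left]
  linarith

lemma inner_fst_le_add_of_mem_regNormal {F' : E → G}
    (hη : η ∈ regNormal {q : WithLp 2 (E × G) | F q.fst - q.snd ∈ Γ} p)
    (hF : HasDirDerivAt F F' p.fst) {K : NNReal} {s : Set E} (hs : s ∈ 𝓝 p.fst)
    (hK : LipschitzOnWith K F s) (lam : G) (u : E) :
    ⟪η.fst, u⟫ ≤ ⟪lam, F' u⟫ + ‖lam + η.snd‖ * K * ‖u‖ :=
  calc ⟪η.fst, u⟫ ≤ ⟪-η.snd, F' u⟫ := inner_fst_le_of_mem_regNormal hη hF u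
    _ = ⟪lam, F' u⟫ - ⟪lam + η.snd, F' u⟫ := by
        rw [inner_add_left, inner_neg_left]; ring
    _ ≤ ⟪lam, F' u⟫ + ‖lam + η.snd‖ * (K * ‖u‖) := by
        rw [sub_eq_add_neg]
        gcongr
        exact (neg_le_abs _).trans ((abs_real_inner_le_norm _ _).trans
          (by gcongr; exact hF.norm_le hs hK u))
    _ = ⟪lam, F' u⟫ + ‖lam + η.snd‖ * K * ‖u‖ := by ring

lemma neg_snd_mem_regNormal (hη : η ∈ regNormal {q : WithLp 2 (E × G) | F q.fst - q.snd ∈ Γ} p) :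
    -η.snd ∈ regNormal Γ (F p.fst - p.snd) := by
  refine ⟨hη.1, fun w ⟨_, wk, tk, hwk, htpos, ht0, hmem⟩ => ?_⟩
  have htan : WithLp.toLp 2 (0, -w) ∈ tanCone {q : WithLp 2 (E × G) | F q.fst - q.snd ∈ Γ} p :=
    ⟨hη.1, fun k => WithLp.toLp 2 (0, -wk k), tk,
      ((WithLp.prod_continuous_toLp 2 E G).tendsto _).comp
        (tendsto_const_nhds.prodMk_nhds hwk.neg), htpos, ht0,
      fun k => by
        simp only [mem_ofPred_eq, WithLp.add_fst, WithLp.add_snd, WithLp.smul_fst,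
          WithLp.smul_snd, WithLp.toLp_fst, WithLp.toLp_snd, smul_zero, add_zero, smul_neg]
        convert hmem k using 1
        abel⟩
  have h := hη.2 _ htan
  simp only [WithLp.prod_inner_apply, WithLp.ofLp_fst, WithLp.ofLp_snd, inner_zero_left,
    zero_add, inner_neg_left] at h
  rw [inner_neg_right]
  linarith

end PerturbedSet

theorem stmt2_general {n l : ℕ}
    (F : Eu n → Eu l) (F' : Eu n → Eu n → Eu l)
    (hLip : LocallyLipschitz F) (hF' : IsDirDeriv F F')
    (Γ : Set (Eu l))
    (Z : Set (WithLp 2 (Eu n × Eu l)))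
    (hZ : Z = {p | F ((WithLp.equiv 2 (Eu n × Eu l)) p).1
            - ((WithLp.equiv 2 (Eu n × Eu l)) p).2 ∈ Γ})
    (x : Eu n) (δ : Eu l)
    (hmem : (WithLp.equiv 2 (Eu n × Eu l)).symm (x, δ) ∈ Z) :
    limNormal Z ((WithLp.equiv 2 (Eu n × Eu l)).symm (x, δ)) ⊆
      {p | ∃ (ξ : Eu n) (lam : Eu l),
        p = (WithLp.equiv 2 (Eu n × Eu l)).symm (ξ, -lam) ∧
        ξ ∈ scalSubdiff F lam x ∧ lam ∈ limNormal Γ (F x - δ)} := by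
  subst hZ
  rintro η ⟨-, pk, ηk, hpk, hηk, hreg⟩
  have hy := ((WithLp.continuous_fst 2 _ _).tendsto _).comp hpk
  have hμ := ((WithLp.continuous_snd 2 _ _).tendsto _).comp hηk
  refine ⟨η.fst, -η.snd, by rw [neg_neg]; rfl, ?_, ?_⟩
  · obtain ⟨K, U, hU, hK⟩ := hLip x
    show η.fst ∈ limSubdiff (fun y => ⟪-η.snd, F y⟫) x
    refine mem_limSubdiff_of_tendsto_dini
      ((innerSL ℝ (-η.snd)).lipschitz.locallyLipschitz.comp hLip)
      (fun z => HasDirDerivAt.inner_left (hF' z) _) hy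
      (((WithLp.continuous_fst 2 _ _).tendsto _).comp hηk)
      (c := fun k => ‖-η.snd + (ηk k).snd‖ * K) ?_ (fun k => by positivity) ?_
    · simpa using ((tendsto_const_nhds (x := -η.snd)).add hμ).norm.mul_const (K : ℝ)
    filter_upwards [hy (interior_mem_nhds.2 hU)] with k hk
    exact inner_fst_le_add_of_mem_regNormal (hreg k) (hF' _) (isOpen_interior.mem_nhds hk)
      (hK.mono interior_subset) _
  · exact ⟨hmem, fun k => F (pk k).fst - (pk k).snd, fun k => -(ηk k).snd,
      ((hLip.continuous.tendsto x).comp hy).sub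
        (((WithLp.continuous_snd 2 _ _).tendsto _).comp hpk),
      hμ.neg, fun k => neg_snd_mem_regNormal (hreg k)⟩

/-- Upper estimate for the limiting normal cone to the perturbed feasible set
`Z = {(x, δ) : F(x) - δ ∈ Γ}`. -/
theorem stmt2 {n l : ℕ}
    (F : Eu n → Eu l) (F' : Eu n → Eu n → Eu l)
    (hLip : LocallyLipschitz F) (hF' : IsDirDeriv F F')
    (Γ : Set (Eu l)) (hΓcl : IsClosed Γ)
    (Z : Set (WithLp 2 (Eu n × Eu l)))
    (hZ : Z = {p | F ((WithLp.equiv 2 (Eu n × Eu l)) p).1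
            - ((WithLp.equiv 2 (Eu n × Eu l)) p).2 ∈ Γ})
    (x : Eu n) (δ : Eu l)
    (hmem : (WithLp.equiv 2 (Eu n × Eu l)).symm (x, δ) ∈ Z) :
    limNormal Z ((WithLp.equiv 2 (Eu n × Eu l)).symm (x, δ)) ⊆
      {p | ∃ (ξ : Eu n) (lam : Eu l),
        p = (WithLp.equiv 2 (Eu n × Eu l)).symm (ξ, -lam) ∧
        ξ ∈ scalSubdiff F lam x ∧ lam ∈ limNormal Γ (F x - δ)} :=
  stmt2_general F F' hLip hF' Γ Z hZ x δ hmem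
end
end

section
/- Let f : ℝ^n → ℝ be continuously differentiable, let X ⊂ ℝ^n be nonempty and closed, and let x̄ ∈ X satisfy ∇f(x̄)^T d > 0 for all d ∈ T_X(x̄) \ {0}. Then x̄ is a strict local minimizer of f over X, i.e., there is a neighborhood U of x̄ such that f(x) > f(x̄) for all x ∈ (X ∩ U) \ {x̄}. -/
/-!
Were `x` not a strict local minimizer, there would be points `y k ∈ X \ {x}` with `y k → x`
and `f (y k) ≤ f x`. By compactness of the unit sphere a subsequence of the unit directions
from `x` to `y k` converges to some `d` with `‖d‖ = 1`, which lies in the tangent cone by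
definition, while `⟪∇f x, d⟫ = lim (f (y k) - f x) / ‖y k - x‖ ≤ 0`.
-/

open Filter Topology Metric Set
open scoped RealInnerProductSpace Pointwise

noncomputable section

section TangentDirections

variable {E : Type*} [NormedAddCommGroup E] [NormedSpace ℝ E]

def unitDir (x y : E) : E := ‖y - x‖⁻¹ • (y - x)

lemma norm_unitDir {x y : E} (hxy : y ≠ x) : ‖unitDir x y‖ = 1 := by
  rw [unitDir, norm_smul, norm_inv, norm_norm,
    inv_mul_cancel₀ (norm_ne_zero_iff.2 (sub_ne_zero.2 hxy))]

lemma add_norm_smul_unitDir {x y : E} (hxy : y ≠ x) : x + ‖y - x‖ • unitDir x y = y := by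
  rw [unitDir, smul_smul, mul_inv_cancel₀ (norm_ne_zero_iff.2 (sub_ne_zero.2 hxy)), one_smul,
    add_sub_cancel]

lemma exists_subseq_tendsto_unitDir [ProperSpace E] {x : E} {y : ℕ → E} (hy : ∀ k, y k ≠ x) :
    ∃ d : E, ‖d‖ = 1 ∧ ∃ φ : ℕ → ℕ, StrictMono φ ∧
      Tendsto (fun k => unitDir x (y (φ k))) atTop (𝓝 d) := by
  obtain ⟨d, hd, φ, hφ, hlim⟩ := (isCompact_sphere (0 : E) 1).tendsto_subseq
    (x := fun k => unitDir x (y k)) fun k => by simp [norm_unitDir (hy k)]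
  exact ⟨d, by simpa using hd, φ, hφ, hlim⟩

lemma HasFDerivAt.tendsto_slope_unitDir {f : E → ℝ} {f' : E →L[ℝ] ℝ} {x d : E} {y : ℕ → E}
    (hf : HasFDerivAt f f' x) (hy : Tendsto y atTop (𝓝 x))
    (hdir : Tendsto (fun k => unitDir x (y k)) atTop (𝓝 d)) :
    Tendsto (fun k => (f (y k) - f x) / ‖y k - x‖) atTop (𝓝 (f' d)) := by
  have hrem : Tendsto (fun k => (f (y k) - f x - f' (y k - x)) / ‖y k - x‖) atTop (𝓝 0) := by
    simpa using ((hf.isLittleO.comp_tendsto hy).norm_right).tendsto_div_nhds_zero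
  have hlin : Tendsto (fun k => f' (unitDir x (y k))) atTop (𝓝 (f' d)) :=
    (f'.continuous.tendsto d).comp hdir
  refine (zero_add (f' d) ▸ hrem.add hlin).congr fun k => ?_
  simp only [unitDir, map_smul, smul_eq_mul]
  ring

end TangentDirections

lemma mem_tanCone_of_tendsto_unitDir {H : Type*} [NormedAddCommGroup H] [InnerProductSpace ℝ H]
    {Ω : Set H} {x d : H} {y : ℕ → H} (hx : x ∈ Ω) (hyΩ : ∀ k, y k ∈ Ω) (hyx : ∀ k, y k ≠ x)
    (hy : Tendsto y atTop (𝓝 x)) (hdir : Tendsto (fun k => unitDir x (y k)) atTop (𝓝 d)) :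
    d ∈ tanCone Ω x := by
  refine ⟨hx, fun k => unitDir x (y k), fun k => ‖y k - x‖, hdir,
    fun k => norm_pos_iff.2 (sub_ne_zero.2 (hyx k)), ?_, fun k => ?_⟩
  · simpa [← dist_eq_norm] using (tendsto_iff_dist_tendsto_zero.1 hy)
  · rw [add_norm_smul_unitDir (hyx k)]
    exact hyΩ k

theorem stmt4_general {n : ℕ} (f : Eu n → ℝ) (hf : ContDiff ℝ 1 f)
    (X : Set (Eu n))
    (x : Eu n) (hx : x ∈ X)
    (hpos : ∀ d ∈ tanCone X x, d ≠ 0 → 0 < ⟪gradient f x, d⟫) :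
    ∃ U ∈ 𝓝 x, ∀ y ∈ X ∩ U, y ≠ x → f x < f y := by
  by_contra! h
  have hacc : x ∈ closure {y | y ∈ X ∧ y ≠ x ∧ f y ≤ f x} :=
    mem_closure_iff_nhds.2 fun U hU => by
      obtain ⟨y, ⟨hyX, hyU⟩, hyx, hfy⟩ := h U hU
      exact ⟨y, hyU, hyX, hyx, hfy⟩
  obtain ⟨y, hyS, hy⟩ := mem_closure_iff_seq_limit.1 hacc
  obtain ⟨d, hd, φ, hφ, hdir⟩ := exists_subseq_tendsto_unitDir fun k => (hyS k).2.1
  have hyφ : Tendsto (y ∘ φ) atTop (𝓝 x) := hy.comp hφ.tendsto_atTop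
  have hdT : d ∈ tanCone X x :=
    mem_tanCone_of_tendsto_unitDir hx (fun k => (hyS (φ k)).1) (fun k => (hyS (φ k)).2.1)
      hyφ hdir
  have hslope := (hf.differentiable one_ne_zero x).hasGradientAt.hasFDerivAt
    |>.tendsto_slope_unitDir hyφ hdir
  have hdescent : ⟪gradient f x, d⟫ ≤ 0 := by
    refine le_of_tendsto' hslope fun k => div_nonpos_of_nonpos_of_nonneg ?_ (norm_nonneg _)
    exact sub_nonpos.2 (hyS (φ k)).2.2
  exact (hpos d hdT (norm_ne_zero_iff.1 (hd ▸ one_ne_zero))).not_ge hdescent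

/-- Primal first-order sufficient optimality condition for a strict local minimizer. -/
theorem stmt4 {n : ℕ} (f : Eu n → ℝ) (hf : ContDiff ℝ 1 f)
    (X : Set (Eu n)) (hne : X.Nonempty) (hcl : IsClosed X)
    (x : Eu n) (hx : x ∈ X)
    (hpos : ∀ d ∈ tanCone X x, d ≠ 0 → 0 < ⟪gradient f x, d⟫) :
    ∃ U ∈ 𝓝 x, ∀ y ∈ X ∩ U, y ≠ x → f x < f y :=
  stmt4_general f hf X x hx hpos

end
end

section
/- Let f : ℝ^n → ℝ be continuously differentiable, let X ⊂ ℝ^n be nonempty and closed, and let x̄ ∈ X be a local minimizer of f over X. Then (i) −∇f(x̄) ∈ N̂_X(x̄), and (ii) for every d ∈ Ĉ(x̄) with ‖d‖ = 1 one has −∇f(x̄) ∈ N_X(x̄; d). -/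
open Filter Topology Metric Set
open scoped RealInnerProductSpace Pointwise

noncomputable section

/-!
For (i), the difference quotients of `f` along points `x̄ + tₖ dₖ ∈ X` tend to `⟪∇f x̄, d⟫` and
are eventually nonnegative. For (ii), fix `x̄ + tₖ dₖ ∈ X` with `dₖ → d` and let `zₖ` minimize the
penalized function `f y + tₖ⁻¹ ‖y - x̄ - tₖ dₖ‖²` over `X` near `x̄`. Comparing `zₖ` with
`x̄ + tₖ dₖ` and with `x̄` gives `(tₖ⁻¹ ‖zₖ - x̄ - tₖ dₖ‖)² ≤ tₖ⁻¹ (f (x̄ + tₖ dₖ) - f x̄)`, whose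
limit is `⟪∇f x̄, d⟫ ≤ 0`; so `zₖ` approaches `x̄` from direction `d`, and (i) for the penalized
problem at `zₖ` yields regular normals `-∇f zₖ - 2 tₖ⁻¹ (zₖ - x̄ - tₖ dₖ) → -∇f x̄`.
-/

open InnerProductSpace

theorem IsMinOn.isLocalMinOn_of_mem_nhds {α β : Type*} [TopologicalSpace α] [Preorder β]
    {f : α → β} {s t : Set α} {a : α} (hf : IsMinOn f (s ∩ t) a) (ht : t ∈ 𝓝 a) :
    IsLocalMinOn f s a := by
  have := hf.localize
  rwa [IsLocalMinOn, nhdsWithin_inter_of_mem' (mem_nhdsWithin_of_mem_nhds ht)] at this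

theorem tendsto_zero_of_sq_le_of_tendsto_nonpos {α : Type*} {l : Filter α} {b q : α → ℝ} {c : ℝ}
    (hb : ∀ k, 0 ≤ b k) (hbq : ∀ᶠ k in l, b k ^ 2 ≤ q k) (hq : Tendsto q l (𝓝 c))
    (hc : c ≤ 0) : Tendsto b l (𝓝 0) := by
  have hmax : Tendsto (fun k => max (q k) 0) l (𝓝 0) := by
    simpa [max_eq_right hc] using hq.max (tendsto_const_nhds (x := (0 : ℝ)))
  have hsq : Tendsto (fun k => b k ^ 2) l (𝓝 0) :=
    squeeze_zero' (.of_forall fun k => sq_nonneg _)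
      (hbq.mono fun k hk => hk.trans (le_max_left _ _)) hmax
  simpa [Real.sqrt_sq (hb _)] using hsq.sqrt

theorem IsMinOn.sq_inv_mul_norm_sub_le {E : Type*} [SeminormedAddCommGroup E] {f : E → ℝ}
    {K : Set E} {x z a : E} {t : ℝ} (hz : IsMinOn (fun y => f y + t⁻¹ * ‖y - a‖ ^ 2) K z)
    (ht : 0 < t) (ha : a ∈ K) (hxz : f x ≤ f z) :
    (t⁻¹ * ‖z - a‖) ^ 2 ≤ t⁻¹ * (f a - f x) := by
  have hza : f z + t⁻¹ * ‖z - a‖ ^ 2 ≤ f a := by simpa using hz ha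
  calc (t⁻¹ * ‖z - a‖) ^ 2 = t⁻¹ * (t⁻¹ * ‖z - a‖ ^ 2) := by ring
    _ ≤ t⁻¹ * (f a - f x) := by gcongr; linarith

section Normed

variable {E : Type*} [NormedAddCommGroup E] [NormedSpace ℝ E] {x d : E} {z dk : ℕ → E}
  {t : ℕ → ℝ}

theorem tendsto_inv_smul_sub_of_tendsto_inv_smul_sub_add (ht : ∀ k, t k ≠ 0)
    (hdk : Tendsto dk atTop (𝓝 d))
    (hz : Tendsto (fun k => (t k)⁻¹ • (z k - (x + t k • dk k))) atTop (𝓝 0)) :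
    Tendsto (fun k => (t k)⁻¹ • (z k - x)) atTop (𝓝 d) := by
  refine (zero_add d ▸ hz.add hdk).congr fun k => ?_
  rw [sub_add_eq_sub_sub, smul_sub, inv_smul_smul₀ (ht k), sub_add_cancel]

theorem tendsto_of_tendsto_inv_smul_sub (ht : ∀ k, t k ≠ 0) (ht0 : Tendsto t atTop (𝓝 0))
    (hz : Tendsto (fun k => (t k)⁻¹ • (z k - x)) atTop (𝓝 d)) : Tendsto z atTop (𝓝 x) := by
  refine (add_zero x ▸ zero_smul ℝ d ▸ tendsto_const_nhds.add (ht0.smul hz)).congr fun k => ?_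
  rw [smul_inv_smul₀ (ht k), add_sub_cancel]

end Normed

section Cones

variable {H : Type*} [NormedAddCommGroup H] [InnerProductSpace ℝ H]

theorem mem_dirLimNormal_of_tendsto {Ω : Set H} {x d η : H} {z ηk : ℕ → H} {t : ℕ → ℝ}
    (hx : x ∈ Ω) (ht : ∀ k, 0 < t k) (ht0 : Tendsto t atTop (𝓝 0))
    (hz : Tendsto (fun k => (t k)⁻¹ • (z k - x)) atTop (𝓝 d)) (hη : Tendsto ηk atTop (𝓝 η))
    (hN : ∀ᶠ k in atTop, ηk k ∈ regNormal Ω (z k)) : η ∈ dirLimNormal Ω x d := by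
  obtain ⟨N, hN⟩ := eventually_atTop.1 hN
  have hshift := tendsto_add_atTop_nat N
  refine ⟨hx, fun k => (t (k + N))⁻¹ • (z (k + N) - x), fun k => t (k + N), fun k => ηk (k + N),
    hz.comp hshift, fun k => ht _, ht0.comp hshift, hη.comp hshift, fun k => ?_⟩
  rw [smul_inv_smul₀ (ht _).ne', add_sub_cancel]
  exact hN _ le_add_self

variable [CompleteSpace H]

theorem tendsto_slope_of_hasGradientAt {g : H → ℝ} {G y v : H} (hG : HasGradientAt g G y)
    {dk : ℕ → H} {tk : ℕ → ℝ} (hdk : Tendsto dk atTop (𝓝 v)) (htk : ∀ k, 0 < tk k)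
    (htk0 : Tendsto tk atTop (𝓝 0)) :
    Tendsto (fun k => (tk k)⁻¹ * (g (y + tk k • dk k) - g y)) atTop (𝓝 ⟪G, v⟫) := by
  have hcd : Tendsto (fun k => (tk k)⁻¹ • tk k • dk k) atTop (𝓝 v) :=
    hdk.congr fun k => (inv_smul_smul₀ (htk k).ne' _).symm
  simpa [toDual_apply_apply] using
    hG.hasFDerivAt.hasFDerivWithinAt.lim (s := univ) (by simpa using htk0.smul hdk)
      (.of_forall fun _ => mem_univ _) hcd

theorem neg_mem_regNormal_of_isLocalMinOn {g : H → ℝ} {G : H} {X : Set H} {y : H} (hy : y ∈ X)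
    (hG : HasGradientAt g G y) (hmin : IsLocalMinOn g X y) : -G ∈ regNormal X y := by
  refine ⟨hy, fun v ⟨_, dk, tk, hdk, htk, htk0, hmem⟩ => ?_⟩
  have hnear : Tendsto (fun k => y + tk k • dk k) atTop (𝓝[X] y) :=
    tendsto_nhdsWithin_iff.2
      ⟨by simpa using tendsto_const_nhds.add (htk0.smul hdk), .of_forall hmem⟩
  have hslope : 0 ≤ ⟪G, v⟫ :=
    ge_of_tendsto (tendsto_slope_of_hasGradientAt hG hdk htk htk0) <|
      (hnear.eventually hmin).mono fun k hk =>
        mul_nonneg (inv_nonneg.2 (htk k).le) (sub_nonneg.2 hk)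
  rw [inner_neg_right, real_inner_comm]
  linarith

theorem HasGradientAt.add_const_mul_norm_sub_sq {g : H → ℝ} {G y : H} (hG : HasGradientAt g G y)
    (c : ℝ) (a : H) :
    HasGradientAt (fun z => g z + c * ‖z - a‖ ^ 2) (G + (2 * c) • (y - a)) y := by
  rw [hasGradientAt_iff_hasFDerivAt]
  refine (hG.hasFDerivAt.add
    (((hasFDerivAt_id y).sub_const a).norm_sq.const_mul c)).congr_fderiv ?_
  ext w
  simp only [add_apply, smul_apply,
    ContinuousLinearMap.comp_apply, ContinuousLinearMap.id_apply, toDual_apply_apply,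
    coe_innerSL_apply, id_eq, inner_add_left, real_inner_smul_left, nsmul_eq_mul, smul_eq_mul]
  ring

theorem neg_gradient_mem_dirLimNormal_of_isLocalMinOn [ProperSpace H] {f : H → ℝ}
    (hf : ContDiff ℝ 1 f) {X : Set H} (hX : IsClosed X) {x d : H} (hmin : IsLocalMinOn f X x)
    (hd : ⟪gradient f x, d⟫ ≤ 0) (hdX : d ∈ tanCone X x) : -gradient f x ∈ dirLimNormal X x d := by
  obtain ⟨hx, dk, t, hdk, ht, ht0, hmem⟩ := hdX
  have hfd : Differentiable ℝ f := hf.differentiable one_ne_zero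
  obtain ⟨r, hr, hrmin⟩ : ∃ r > 0, ∀ y ∈ ball x r ∩ X, f x ≤ f y :=
    nhdsWithin_basis_ball.eventually_iff.1 hmin
  set K := X ∩ closedBall x (r / 2)
  set a : ℕ → H := fun k => x + t k • dk k
  have hK : IsCompact K := (isCompact_closedBall x _).inter_left hX
  have hxK : x ∈ K := ⟨hx, mem_closedBall_self (half_pos hr).le⟩
  choose z hzK hzmin using fun k => hK.exists_isMinOn ⟨x, hxK⟩
    (hf.continuous.add (continuous_const.mul ((continuous_id.sub continuous_const).norm.pow 2))
      |>.continuousOn : ContinuousOn (fun y => f y + (t k)⁻¹ * ‖y - a k‖ ^ 2) K)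
  have haK : ∀ᶠ k in atTop, a k ∈ K := by
    have ha : Tendsto a atTop (𝓝 x) := by
      simpa using tendsto_const_nhds.add (ht0.smul hdk)
    filter_upwards [ha (closedBall_mem_nhds x (half_pos hr))] with k hk using ⟨hmem k, hk⟩
  have hres : Tendsto (fun k => (t k)⁻¹ * ‖z k - a k‖) atTop (𝓝 0) := by
    refine tendsto_zero_of_sq_le_of_tendsto_nonpos (fun k => by have := ht k; positivity) ?_
      (tendsto_slope_of_hasGradientAt (hfd x).hasGradientAt hdk ht ht0) hd
    filter_upwards [haK] with k hk
    refine (hzmin k).sq_inv_mul_norm_sub_le (ht k) hk (hrmin _ ⟨?_, (hzK k).1⟩)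
    exact (mem_closedBall.1 (hzK k).2).trans_lt (by linarith)
  have hpen : Tendsto (fun k => (t k)⁻¹ • (z k - a k)) atTop (𝓝 0) := by
    refine squeeze_zero_norm (fun k => ?_) hres
    rw [norm_smul, Real.norm_of_nonneg (inv_nonneg.2 (ht k).le)]
  have hdir : Tendsto (fun k => (t k)⁻¹ • (z k - x)) atTop (𝓝 d) :=
    tendsto_inv_smul_sub_of_tendsto_inv_smul_sub_add (fun k => (ht k).ne') hdk hpen
  have hz : Tendsto z atTop (𝓝 x) := tendsto_of_tendsto_inv_smul_sub (fun k => (ht k).ne') ht0 hdir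
  refine mem_dirLimNormal_of_tendsto hx ht ht0 hdir
    (ηk := fun k => -(gradient f (z k) + (2 * (t k)⁻¹) • (z k - a k))) ?_ ?_
  · have hgrad : Continuous (gradient f) :=
      (toDual ℝ H).symm.continuous.comp (hf.continuous_fderiv one_ne_zero)
    simpa [mul_smul] using (((hgrad.tendsto x).comp hz).add (hpen.const_smul (2 : ℝ))).neg
  · filter_upwards [hz (ball_mem_nhds x (half_pos hr))] with k hk
    exact neg_mem_regNormal_of_isLocalMinOn (hzK k).1
      ((hfd (z k)).hasGradientAt.add_const_mul_norm_sub_sq _ _)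
      ((hzmin k).isLocalMinOn_of_mem_nhds
        (mem_of_superset (isOpen_ball.mem_nhds hk) ball_subset_closedBall))

end Cones

theorem stmt5_general {n : ℕ} (f : Eu n → ℝ) (hf : ContDiff ℝ 1 f)
    (X : Set (Eu n)) (hcl : IsClosed X)
    (x : Eu n) (hx : x ∈ X) (hmin : IsLocalMinOn f X x) :
    -gradient f x ∈ regNormal X x ∧
    ∀ d : Eu n, ⟪gradient f x, d⟫ ≤ 0 → d ∈ tanCone X x → ‖d‖ = 1 →
      -gradient f x ∈ dirLimNormal X x d :=
  ⟨neg_mem_regNormal_of_isLocalMinOn hx ((hf.differentiable one_ne_zero) x).hasGradientAt hmin,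
    fun _ hd hdX _ => neg_gradient_mem_dirLimNormal_of_isLocalMinOn hf hcl hmin hd hdX⟩

/-- Dual first-order necessary optimality conditions. -/
theorem stmt5 {n : ℕ} (f : Eu n → ℝ) (hf : ContDiff ℝ 1 f)
    (X : Set (Eu n)) (hne : X.Nonempty) (hcl : IsClosed X)
    (x : Eu n) (hx : x ∈ X) (hmin : IsLocalMinOn f X x) :
    -gradient f x ∈ regNormal X x ∧
    ∀ d : Eu n, ⟪gradient f x, d⟫ ≤ 0 → d ∈ tanCone X x → ‖d‖ = 1 →
      -gradient f x ∈ dirLimNormal X x d :=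
  stmt5_general f hf X hcl x hx hmin

end
end

section
/- Every local minimizer x̄ of (P) is AM-stationary. -/
open Filter Topology Metric Set
open scoped RealInnerProductSpace Pointwise

noncomputable section

/-!
Quadratic penalty method. Around `x` choose a closed ball on which `x` minimizes `f` over the
feasible set and `F` is Lipschitz, and let `xₖ` minimize
`f y + ‖y - x‖² + (k + 1) dist(F y, Γ)²` over that ball. Cluster points of `(xₖ)` are feasible
because the penalty weight blows up, and equal `x` because of the proximal term, so `xₖ → x`.
With `zₖ` a projection of `F xₖ` onto `Γ`, the multiplier `λₖ = 2 (k + 1) (F xₖ - zₖ)` is a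
proximal normal to `Γ` at `zₖ = F xₖ - δₖ`. Expanding `⟪λₖ, F y - F xₖ⟫` by polarization and
using the minimality of `xₖ` and the Lipschitz bound, `⟪λₖ, F ·⟫` is bounded below near `xₖ` by
a smooth function touching it at `xₖ` with gradient `-(∇f xₖ + 2 (xₖ - x))`, which is therefore
a regular subgradient.
-/

section Gradient

variable {H : Type*} [NormedAddCommGroup H] [InnerProductSpace ℝ H] [CompleteSpace H]
  {φ ψ : H → ℝ} {g g' x : H}

theorem HasGradientAt.add (hφ : HasGradientAt φ g x) (hψ : HasGradientAt ψ g' x) :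
    HasGradientAt (fun y => φ y + ψ y) (g + g') x := by
  rw [hasGradientAt_iff_hasFDerivAt, map_add]
  exact hφ.hasFDerivAt.add hψ.hasFDerivAt

theorem HasGradientAt.const_sub (c : ℝ) (hψ : HasGradientAt ψ g x) :
    HasGradientAt (fun y => c - ψ y) (-g) x := by
  rw [hasGradientAt_iff_hasFDerivAt, map_neg]
  exact hψ.hasFDerivAt.const_sub c

theorem HasGradientAt.const_mul (c : ℝ) (hψ : HasGradientAt ψ g x) :
    HasGradientAt (fun y => c * ψ y) (c • g) x := by
  rw [hasGradientAt_iff_hasFDerivAt, map_smul]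
  exact hψ.hasFDerivAt.const_mul c

theorem hasGradientAt_norm_sub_sq (u x : H) :
    HasGradientAt (fun y => ‖y - u‖ ^ 2) ((2 : ℝ) • (x - u)) x := by
  rw [hasGradientAt_iff_hasFDerivAt]
  refine ((hasStrictFDerivAt_norm_sq (x - u)).hasFDerivAt.comp x
    ((hasFDerivAt_id x).sub_const u)).congr_fderiv ?_
  ext v
  simp

end Gradient

section Normals

variable {H : Type*} [NormedAddCommGroup H] [InnerProductSpace ℝ H]

theorem regNormal_subset_limNormal (Ω : Set H) (x : H) : regNormal Ω x ⊆ limNormal Ω x :=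
  fun η hη => ⟨hη.1, fun _ => x, fun _ => η, tendsto_const_nhds, tendsto_const_nhds,
    fun _ => hη⟩

theorem tanCone_subset_posTangentConeAt (Ω : Set H) (x : H) :
    tanCone Ω x ⊆ posTangentConeAt Ω x := by
  rintro d ⟨-, dk, tk, hdk, htk, htk0, hmem⟩
  refine mem_tangentConeAt_of_seq atTop (fun k => ⟨(tk k)⁻¹, (inv_pos.2 (htk k)).le⟩)
    (fun k => tk k • dk k) (by simpa using htk0.smul hdk) (Eventually.of_forall hmem) ?_
  refine hdk.congr fun k => ?_
  change dk k = (tk k)⁻¹ • tk k • dk k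
  rw [smul_smul, inv_mul_cancel₀ (htk k).ne', one_smul]

variable [CompleteSpace H]

theorem neg_mem_regNormal_of_isLocalMinOn_s10 {Ω : Set H} {ψ : H → ℝ} {g z : H} (hz : z ∈ Ω)
    (hmin : IsLocalMinOn ψ Ω z) (hψ : HasGradientAt ψ g z) : -g ∈ regNormal Ω z := by
  refine ⟨hz, fun v hv => ?_⟩
  have := hmin.hasFDerivWithinAt_nonneg hψ.hasFDerivAt.hasFDerivWithinAt
    (tanCone_subset_posTangentConeAt Ω z hv)
  rw [InnerProductSpace.toDual_apply_apply] at this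
  rw [inner_neg_right, real_inner_comm]
  linarith

theorem smul_sub_mem_regNormal_of_infDist_eq {Γ : Set H} {u z : H} (hz : z ∈ Γ)
    (hdist : infDist u Γ = dist u z) {c : ℝ} (hc : 0 ≤ c) : c • (u - z) ∈ regNormal Γ z := by
  have hmin : IsMinOn (fun y => c / 2 * ‖y - u‖ ^ 2) Γ z := fun y hy => by
    have : ‖z - u‖ ≤ ‖y - u‖ := by
      rw [← dist_eq_norm, ← dist_eq_norm, dist_comm, dist_comm y, ← hdist]
      exact infDist_le_dist_of_mem hy
    change c / 2 * ‖z - u‖ ^ 2 ≤ c / 2 * ‖y - u‖ ^ 2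
    gcongr
  convert neg_mem_regNormal_of_isLocalMinOn_s10 hz hmin.localize
    ((hasGradientAt_norm_sub_sq u z).const_mul (c / 2)) using 1
  module

end Normals

section Subdifferential

variable {H : Type*} [NormedAddCommGroup H] [InnerProductSpace ℝ H] [CompleteSpace H]

theorem pl2_mem_regNormal_epigraphSet_of_le {φ ψ : H → ℝ} {g x : H}
    (hψ : HasGradientAt ψ g x) (hle : ∀ᶠ y in 𝓝 x, ψ y ≤ φ y) (heq : ψ x = φ x) :
    pl2 g (-1) ∈ regNormal (epigraphSet φ) (pl2 x (φ x)) := by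
  let e := WithLp.prodContinuousLinearEquiv 2 ℝ H ℝ
  let Ψ : WithLp 2 (H × ℝ) → ℝ := fun p => (e p).2 - ψ (e p).1
  have hΨ : HasGradientAt Ψ (pl2 (-g) 1) (pl2 x (φ x)) := by
    rw [hasGradientAt_iff_hasFDerivAt]
    refine ((hasFDerivAt_snd.sub (hψ.hasFDerivAt.comp _ hasFDerivAt_fst)).comp _
      e.hasFDerivAt).congr_fderiv ?_
    ext v
    simp [e, pl2, WithLp.prod_inner_apply]
    ring
  have hmem : pl2 x (φ x) ∈ epigraphSet φ := by simp [epigraphSet, pl2]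
  have hmin : IsLocalMinOn Ψ (epigraphSet φ) (pl2 x (φ x)) := by
    have hfst : Tendsto (fun p => (e p).1) (𝓝 (pl2 x (φ x))) (𝓝 x) :=
      (continuous_fst.comp e.continuous).tendsto' _ _ rfl
    filter_upwards [nhdsWithin_le_nhds (hfst.eventually hle), self_mem_nhdsWithin]
      with p hψφ hp
    have hΨx : Ψ (pl2 x (φ x)) = 0 := by simp [Ψ, e, pl2, heq]
    exact hΨx ▸ sub_nonneg.2 (hψφ.trans hp)
  have hneg : pl2 g (-1) = -pl2 (-g) 1 := by simp [pl2, ← WithLp.toLp_neg]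
  exact hneg ▸ neg_mem_regNormal_of_isLocalMinOn_s10 hmem hmin hΨ

end Subdifferential

section Penalty

variable {H G : Type*} [NormedAddCommGroup H] [InnerProductSpace ℝ H] [CompleteSpace H]
  [NormedAddCommGroup G] [InnerProductSpace ℝ G]

theorem two_inner_sub_eq (u w : G) :
    2 * ⟪u, w - u⟫ = ‖w‖ ^ 2 - ‖u‖ ^ 2 - ‖w - u‖ ^ 2 := by
  rw [inner_sub_right, real_inner_self_eq_norm_sq, norm_sub_sq_real, real_inner_comm]
  ring

theorem neg_mem_limSubdiff_of_isLocalMin_penalty {F : H → G} {Γ : Set G} {h : H → ℝ}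
    {g X : H} {z : G} {κ : ℝ} {K : NNReal} {U : Set H} (hz : z ∈ Γ)
    (hdist : infDist (F X) Γ = dist (F X) z) (hκ : 0 ≤ κ) (hK : LipschitzOnWith K F U)
    (hU : U ∈ 𝓝 X) (hh : HasGradientAt h g X)
    (hmin : IsLocalMin (fun y => h y + κ * infDist (F y) Γ ^ 2) X) :
    -g ∈ limSubdiff (fun y => ⟪(2 * κ) • (F X - z), F y⟫) X := by
  set φ : H → ℝ := fun y => ⟪(2 * κ) • (F X - z), F y⟫
  set ψ : H → ℝ := fun y => (φ X + h X) - (h y + κ * K ^ 2 * ‖y - X‖ ^ 2)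
  have hψ : HasGradientAt ψ (-g) X := by
    simpa using (hh.add ((hasGradientAt_norm_sub_sq X X).const_mul (κ * K ^ 2))).const_sub
      (φ X + h X)
  refine regNormal_subset_limNormal _ _
    (pl2_mem_regNormal_epigraphSet_of_le hψ ?_ (by simp [ψ]))
  filter_upwards [hU, hmin] with y hyU hy
  have hφ : φ y - φ X = κ * (‖F y - z‖ ^ 2 - ‖F X - z‖ ^ 2 - ‖F y - F X‖ ^ 2) := by
    have := two_inner_sub_eq (F X - z) (F y - z)
    rw [sub_sub_sub_cancel_right] at this
    simp only [φ, real_inner_smul_left, inner_sub_right] at this ⊢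
    linear_combination κ * this
  have hdX : infDist (F X) Γ = ‖F X - z‖ := hdist.trans (dist_eq_norm _ _)
  have hdy : infDist (F y) Γ ^ 2 ≤ ‖F y - z‖ ^ 2 := by
    gcongr
    · exact infDist_nonneg
    · exact dist_eq_norm (F y) z ▸ infDist_le_dist_of_mem hz
  have hLip : ‖F y - F X‖ ^ 2 ≤ K ^ 2 * ‖y - X‖ ^ 2 := by
    rw [← mul_pow, ← dist_eq_norm, ← dist_eq_norm]
    gcongr
    exact hK.dist_le_mul y hyU X (mem_of_mem_nhds hU)
  simp only [ψ, hdX] at hy ⊢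
  nlinarith [mul_le_mul_of_nonneg_left hdy hκ, mul_le_mul_of_nonneg_left hLip hκ]

end Penalty

theorem tendsto_of_isMinOn_penalty {E : Type*} [NormedAddCommGroup E] {S : Set E}
    (hS : IsCompact S) {f p : E → ℝ} (hf : Continuous f) (hp : Continuous p)
    (hp0 : ∀ y, 0 ≤ p y) {x : E} (hxS : x ∈ S) (hpx : p x = 0)
    (hmin : ∀ y ∈ S, p y = 0 → f x ≤ f y) {c : ℕ → ℝ} (hc : Tendsto c atTop atTop)
    {xk : ℕ → E} (hxk : ∀ k, xk k ∈ S)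
    (hxk_min : ∀ k, IsMinOn (fun y => f y + ‖y - x‖ ^ 2 + c k * p y) S (xk k)) :
    Tendsto xk atTop (𝓝 x) := by
  have hc0 : ∀ᶠ k in atTop, 0 < c k := hc.eventually_gt_atTop 0
  have hval : ∀ k, f (xk k) + ‖xk k - x‖ ^ 2 + c k * p (xk k) ≤ f x := fun k => by
    simpa [hpx] using hxk_min k hxS
  obtain ⟨y₀, -, hy₀⟩ := hS.exists_isMinOn ⟨x, hxS⟩ hf.continuousOn
  have hp_lim : Tendsto (fun k => p (xk k)) atTop (𝓝 0) := by
    have hbound : ∀ᶠ k in atTop, p (xk k) ≤ (f x - f y₀) / c k := by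
      filter_upwards [hc0] with k hk
      rw [le_div_iff₀' hk]
      have hfk : f y₀ ≤ f (xk k) := hy₀ (hxk k)
      nlinarith [hval k]
    exact tendsto_of_tendsto_of_tendsto_of_le_of_le' tendsto_const_nhds
      (tendsto_const_nhds.div_atTop hc) (.of_forall fun k => hp0 _) hbound
  refine hS.tendsto_nhds_of_unique_mapClusterPt (.of_forall hxk) fun y hyS hy => ?_
  obtain ⟨ψ, hψ, hlim⟩ := hy.tendsto_subseq
  have hpy : p y = 0 :=
    tendsto_nhds_unique ((hp.tendsto y).comp hlim) (hp_lim.comp hψ.tendsto_atTop)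
  have hfy : f y + ‖y - x‖ ^ 2 ≤ f x := by
    have hcont : Continuous fun y => f y + ‖y - x‖ ^ 2 :=
      hf.add ((continuous_sub_right x).norm.pow 2)
    refine le_of_tendsto ((hcont.tendsto y).comp hlim) ?_
    filter_upwards [hψ.tendsto_atTop.eventually hc0] with j hj
    show f (xk (ψ j)) + ‖xk (ψ j) - x‖ ^ 2 ≤ f x
    nlinarith [hval (ψ j), mul_nonneg hj.le (hp0 (xk (ψ j)))]
  have hyx : ‖y - x‖ ^ 2 = 0 := le_antisymm (by linarith [hmin y hyS hpy]) (sq_nonneg _)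
  simpa [sub_eq_zero] using hyx

section Stationarity

variable {n l : ℕ} {f : Eu n → ℝ} {F : Eu n → Eu l} {Γ : Set (Eu l)} {x : Eu n}

theorem AMStat.of_eventually {xk : ℕ → Eu n} {lamk δk : ℕ → Eu l} {εk : ℕ → Eu n}
    (hmem : ∀ᶠ k in atTop, εk k - gradient f (xk k) ∈ scalSubdiff F (lamk k) (xk k) ∧
      lamk k ∈ limNormal Γ (F (xk k) - δk k))
    (hx : Tendsto xk atTop (𝓝 x)) (hδ : Tendsto δk atTop (𝓝 0))
    (hε : Tendsto εk atTop (𝓝 0)) : AMStat f F Γ x := by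
  obtain ⟨N, hN⟩ := eventually_atTop.1 hmem
  have hshift := tendsto_add_atTop_nat N
  exact ⟨fun k => xk (k + N), fun k => lamk (k + N), fun k => δk (k + N), fun k => εk (k + N),
    fun k => (hN _ (Nat.le_add_left N k)).1, fun k => (hN _ (Nat.le_add_left N k)).2,
    hx.comp hshift, hδ.comp hshift, hε.comp hshift⟩

theorem AMStat.of_tendsto_isMinOn_penalty {r : ℝ} {K : NNReal} (hr : 0 < r)
    (hf : Differentiable ℝ f) (hK : LipschitzOnWith K F (closedBall x r))
    (hΓne : Γ.Nonempty) (hΓcl : IsClosed Γ) (hfeas : F x ∈ Γ) {c : ℕ → ℝ}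
    (hc : ∀ k, 0 ≤ c k) {xk : ℕ → Eu n} (hxk : Tendsto xk atTop (𝓝 x))
    (hxk_min : ∀ k, IsMinOn (fun y => f y + ‖y - x‖ ^ 2 + c k * infDist (F y) Γ ^ 2)
      (closedBall x r) (xk k)) :
    AMStat f F Γ x := by
  choose z hzΓ hz using fun k => hΓcl.exists_infDist_eq_dist hΓne (F (xk k))
  refine AMStat.of_eventually (lamk := fun k => (2 * c k) • (F (xk k) - z k))
    (δk := fun k => F (xk k) - z k) (εk := fun k => (-2 : ℝ) • (xk k - x)) ?_ hxk ?_ ?_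
  · filter_upwards [hxk.eventually (ball_mem_nhds x hr)] with k hk
    have hnhds : closedBall x r ∈ 𝓝 (xk k) :=
      mem_of_superset (isOpen_ball.mem_nhds hk) ball_subset_closedBall
    have hgrad : HasGradientAt (fun y => f y + ‖y - x‖ ^ 2)
        (gradient f (xk k) + (2 : ℝ) • (xk k - x)) (xk k) :=
      (hf _).hasGradientAt.add (hasGradientAt_norm_sub_sq x (xk k))
    constructor
    · rw [show (-2 : ℝ) • (xk k - x) - gradient f (xk k) =
          -(gradient f (xk k) + (2 : ℝ) • (xk k - x)) by module]
      exact neg_mem_limSubdiff_of_isLocalMin_penalty (hzΓ k) (hz k) (hc k) hK hnhds hgrad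
        ((hxk_min k).isLocalMin hnhds)
    · rw [sub_sub_cancel]
      exact regNormal_subset_limNormal _ _
        (smul_sub_mem_regNormal_of_infDist_eq (hzΓ k) (hz k) (mul_nonneg zero_le_two (hc k)))
  · have hF : ContinuousAt F x := hK.continuousOn.continuousAt (closedBall_mem_nhds x hr)
    rw [tendsto_zero_iff_norm_tendsto_zero]
    simpa only [Function.comp_def, infDist_zero_of_mem hfeas, hz, dist_eq_norm] using
      ((continuous_infDist_pt Γ).continuousAt.comp hF).tendsto.comp hxk
  · simpa using (hxk.sub_const x).const_smul (-2 : ℝ)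

end Stationarity

theorem stmt10_general {n l : ℕ}
    (f : Eu n → ℝ) (hf : ContDiff ℝ 1 f)
    (F : Eu n → Eu l)
    (hLip : LocallyLipschitz F)
    (Γ : Set (Eu l)) (hΓne : Γ.Nonempty) (hΓcl : IsClosed Γ)
    (x : Eu n) (hfeas : F x ∈ Γ) (hmin : IsLocalMinOn f (F ⁻¹' Γ) x) :
    AMStat f F Γ x := by
  obtain ⟨K, U, hU, hK⟩ := hLip x
  obtain ⟨r, hr, hball⟩ : ∃ r > 0, ∀ y ∈ closedBall x r, (F y ∈ Γ → f x ≤ f y) ∧ y ∈ U :=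
    nhds_basis_closedBall.eventually_iff.1 ((eventually_nhdsWithin_iff.1 hmin).and hU)
  have hloc : ∀ y ∈ closedBall x r, infDist (F y) Γ ^ 2 = 0 → f x ≤ f y := fun y hy hpy =>
    (hball y hy).1 <|
      (hΓcl.mem_iff_infDist_zero hΓne).2 (pow_eq_zero_iff two_ne_zero |>.1 hpy)
  have hp : Continuous fun y => infDist (F y) Γ ^ 2 :=
    ((continuous_infDist_pt Γ).comp hLip.continuous).pow 2
  choose xk hxk_mem hxk_min using fun k : ℕ =>
    (isCompact_closedBall x r).exists_isMinOn (nonempty_closedBall.2 hr.le)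
      (f := fun y => f y + ‖y - x‖ ^ 2 + ((k : ℝ) + 1) * infDist (F y) Γ ^ 2)
      ((hf.continuous.add ((continuous_sub_right x).norm.pow 2)).add
        (continuous_const.mul hp)).continuousOn
  have hxk : Tendsto xk atTop (𝓝 x) :=
    tendsto_of_isMinOn_penalty (isCompact_closedBall x r) hf.continuous hp
      (fun y => sq_nonneg _) (mem_closedBall_self hr.le) (by simp [infDist_zero_of_mem hfeas])
      hloc (tendsto_atTop_add_const_right _ 1 tendsto_natCast_atTop_atTop) hxk_mem hxk_min
  exact AMStat.of_tendsto_isMinOn_penalty hr (hf.differentiable one_ne_zero)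
    (hK.mono fun y hy => (hball y hy).2) hΓne hΓcl hfeas (fun k => by positivity) hxk hxk_min

/-- Every local minimizer of (P) is AM-stationary. -/
theorem stmt10 {n l : ℕ}
    (f : Eu n → ℝ) (hf : ContDiff ℝ 1 f)
    (F : Eu n → Eu l) (F' : Eu n → Eu n → Eu l)
    (hLip : LocallyLipschitz F) (hF' : IsDirDeriv F F')
    (Γ : Set (Eu l)) (hΓne : Γ.Nonempty) (hΓcl : IsClosed Γ)
    (x : Eu n) (hfeas : F x ∈ Γ) (hmin : IsLocalMinOn f (F ⁻¹' Γ) x) :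
    AMStat f F Γ x :=
  stmt10_general f hf F hLip Γ hΓne hΓcl x hfeas hmin

end
end

section
/- Let x̄ be feasible for (P) and let {(x^k, λ^k, δ^k, ε^k)} be an AM-stationary sequence w.r.t. x̄. If the sequence {λ^k} is bounded, then x̄ is M-stationary. -/
open Filter Topology Metric Set
open scoped RealInnerProductSpace Pointwise

noncomputable section

/-!
Pass to a subsequence along which `λᵏ → λ`. Both conditions defining an AM-stationary sequence
survive the limit: `λᵏ ∈ N_Γ(F(xᵏ) - δᵏ)` because the limiting normal cone has closed graph (take a
diagonal sequence of regular normals), and `εᵏ - ∇f(xᵏ) ∈ ∂⟨λᵏ, F⟩(xᵏ)` because a regular normal to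
the epigraph of `⟨λᵏ, F⟩` is an `ε`-normal to the epigraph of `⟨λ, F⟩` with `ε → 0`: the two
functions differ by `⟨λ - λᵏ, F⟩`, which is Lipschitz near `x̄` with constant `O(‖λ - λᵏ‖)`.
Projecting onto the epigraph turns `ε`-normals back into nearby regular normals.
-/

section Normals

variable {H : Type*} [NormedAddCommGroup H] [InnerProductSpace ℝ H]

/-- Fréchet `ε`-normals `N̂^ε_Ω(z)`. -/
def epsNormal (Ω : Set H) (z : H) (ε : ℝ) : Set H :=
  {η | z ∈ Ω ∧ ∀ᶠ w in 𝓝[Ω] z, ⟪η, w - z⟫ ≤ ε * ‖w - z‖}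

theorem smul_mem_regNormal {Ω : Set H} {z η : H} {c : ℝ} (hc : 0 ≤ c)
    (hη : η ∈ regNormal Ω z) : c • η ∈ regNormal Ω z :=
  ⟨hη.1, fun d hd => by
    rw [real_inner_smul_right]; exact mul_nonpos_of_nonneg_of_nonpos hc (hη.2 d hd)⟩

theorem sub_mem_regNormal_of_dist_eq_infDist {Ω : Set H} {p w : H} (hw : w ∈ Ω)
    (hp : dist p w = infDist p Ω) : p - w ∈ regNormal Ω w := by
  refine ⟨hw, fun d ⟨_, dk, tk, hdk, htk, htk0, hmem⟩ => ?_⟩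
  have key : ∀ k, ⟪dk k, p - w⟫ ≤ tk k * ‖dk k‖ ^ 2 / 2 := by
    intro k
    have h : ‖p - w‖ ≤ ‖(p - w) - tk k • dk k‖ := by
      rw [← dist_eq_norm, hp, sub_sub, ← dist_eq_norm]
      exact infDist_le_dist_of_mem (hmem k)
    have h2 := pow_le_pow_left₀ (norm_nonneg _) h 2
    rw [norm_sub_sq_real (p - w), real_inner_smul_right, norm_smul, Real.norm_of_nonneg (htk k).le,
      real_inner_comm] at h2
    nlinarith [htk k]
  have hlim : Tendsto (fun k => tk k * ‖dk k‖ ^ 2 / 2) atTop (𝓝 0) := by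
    simpa using (htk0.mul (hdk.norm.pow 2)).div_const 2
  exact le_of_tendsto_of_tendsto' (hdk.inner tendsto_const_nhds) hlim key

theorem mem_tanCone_of_tendsto_s11 {Ω : Set H} {z d : H} {w : ℕ → H} (hz : z ∈ Ω)
    (hwΩ : ∀ k, w k ∈ Ω) (hwz : Tendsto w atTop (𝓝 z)) (hne : ∀ k, w k ≠ z)
    (hd : Tendsto (fun k => ‖w k - z‖⁻¹ • (w k - z)) atTop (𝓝 d)) : d ∈ tanCone Ω z := by
  have hpos : ∀ k, 0 < ‖w k - z‖ := fun k => norm_pos_iff.2 (sub_ne_zero.2 (hne k))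
  refine ⟨hz, _, fun k => ‖w k - z‖, hd, hpos, ?_, fun k => ?_⟩
  · exact tendsto_iff_norm_sub_tendsto_zero.1 hwz
  · rw [smul_inv_smul₀ (hpos k).ne', add_sub_cancel]
    exact hwΩ k

theorem regNormal_subset_epsNormal [ProperSpace H] {Ω : Set H} {z : H} {ε : ℝ} (hε : 0 < ε) :
    regNormal Ω z ⊆ epsNormal Ω z ε := by
  rintro η ⟨hz, hη⟩
  refine ⟨hz, ?_⟩
  by_contra h
  rw [not_eventually, frequently_nhdsWithin_iff] at h
  obtain ⟨w, hwz, hw⟩ := exists_seq_forall_of_frequently h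
  simp only [not_le] at hw
  have hne : ∀ k, w k ≠ z := fun k he => by simpa [he] using (hw k).1
  have hu : ∀ k, ‖w k - z‖⁻¹ • (w k - z) ∈ sphere (0 : H) 1 := fun k => by
    rw [mem_sphere_zero_iff_norm, norm_smul, norm_inv, norm_norm,
      inv_mul_cancel₀ (norm_ne_zero_iff.2 (sub_ne_zero.2 (hne k)))]
  obtain ⟨d, -, σ, hσ, hd⟩ := (isCompact_sphere (0 : H) 1).tendsto_subseq hu
  have hdT : d ∈ tanCone Ω z := mem_tanCone_of_tendsto_s11 hz (fun k => (hw (σ k)).2)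
    (hwz.comp hσ.tendsto_atTop) (fun k => hne _) hd
  have hεd : ε ≤ ⟪η, d⟫ := ge_of_tendsto' (tendsto_const_nhds.inner hd) fun k => by
    change ε ≤ ⟪η, ‖w (σ k) - z‖⁻¹ • (w (σ k) - z)⟫
    rw [real_inner_smul_right, inv_mul_eq_div,
      le_div_iff₀ (norm_pos_iff.2 (sub_ne_zero.2 (hne _)))]
    exact (hw (σ k)).1.le
  linarith [hη d hdT, real_inner_comm η d]

/-- Projecting `z + t • η` onto `Ω`, for small `t > 0`, turns the `ε`-normal `η` into a nearby
regular normal. -/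
theorem exists_regNormal_near_of_mem_epsNormal [ProperSpace H] {Ω : Set H} {z η : H}
    {ε δ : ℝ} (hΩ : IsClosed Ω) (hε : 0 ≤ ε) (hδ : 0 < δ) (hη : η ∈ epsNormal Ω z ε) :
    ∃ w ζ, ζ ∈ regNormal Ω w ∧ ‖w - z‖ < δ ∧ ‖ζ - η‖ ≤ 2 * ε := by
  obtain ⟨hz, hη⟩ := hη
  obtain ⟨ρ, hρ, hρη⟩ := Metric.eventually_nhds_iff.1 (eventually_nhdsWithin_iff.1 hη)
  set t := min ρ δ / (2 * (‖η‖ + 1))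
  have ht : 0 < t := by positivity
  have htη : 2 * t * ‖η‖ < min ρ δ := by
    have : 2 * t * (‖η‖ + 1) = min ρ δ := by simp only [t]; field_simp
    nlinarith
  obtain ⟨w, hwΩ, hw⟩ := hΩ.exists_infDist_eq_dist ⟨z, hz⟩ (z + t • η)
  have hwp : ‖z + t • η - w‖ ≤ t * ‖η‖ := by
    rw [← dist_eq_norm, ← hw]
    simpa [norm_smul, abs_of_pos ht] using infDist_le_dist_of_mem (x := z + t • η) hz
  have hwz : ‖w - z‖ ≤ 2 * t * ‖η‖ := by
    calc ‖w - z‖ = ‖t • η - (z + t • η - w)‖ := by congr 1; abel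
      _ ≤ ‖t • η‖ + ‖z + t • η - w‖ := norm_sub_le _ _
      _ ≤ 2 * t * ‖η‖ := by rw [norm_smul, Real.norm_of_nonneg ht.le]; linarith
  have hsq : ‖w - z‖ ^ 2 ≤ 2 * t * (ε * ‖w - z‖) := by
    have hin := hρη (by rw [dist_eq_norm]; linarith [min_le_left ρ δ]) hwΩ
    have hexp : ‖z + t • η - w‖ ^ 2 = ‖t • η - (w - z)‖ ^ 2 := by congr 2; abel
    rw [norm_sub_sq_real (t • η), norm_smul, real_inner_smul_left,
      Real.norm_of_nonneg ht.le] at hexp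
    nlinarith [pow_le_pow_left₀ (norm_nonneg _) hwp 2]
  have hwz' : ‖w - z‖ ≤ 2 * t * ε := by
    rcases (norm_nonneg (w - z)).eq_or_lt with h | h
    · rw [← h]; positivity
    · nlinarith
  refine ⟨w, t⁻¹ • (z + t • η - w), smul_mem_regNormal (inv_nonneg.2 ht.le)
    (sub_mem_regNormal_of_dist_eq_infDist hwΩ hw.symm), by linarith [min_le_right ρ δ], ?_⟩
  have : t⁻¹ • (z + t • η - w) - η = -(t⁻¹ • (w - z)) := by
    rw [smul_sub, smul_add, inv_smul_smul₀ ht.ne', smul_sub]; abel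
  rw [this, norm_neg, norm_smul, Real.norm_of_nonneg (inv_nonneg.2 ht.le), inv_mul_le_iff₀ ht]
  linarith

theorem mem_limNormal_of_eventually {Ω : Set H} {z η : H} {w ζ : ℕ → H} (hz : z ∈ Ω)
    (hw : Tendsto w atTop (𝓝 z)) (hζ : Tendsto ζ atTop (𝓝 η))
    (h : ∀ᶠ k in atTop, ζ k ∈ regNormal Ω (w k)) : η ∈ limNormal Ω z := by
  obtain ⟨N, hN⟩ := eventually_atTop.1 h
  exact ⟨hz, fun k => w (k + N), fun k => ζ (k + N), (tendsto_add_atTop_iff_nat N).2 hw,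
    (tendsto_add_atTop_iff_nat N).2 hζ, fun k => hN _ (Nat.le_add_left N k)⟩

theorem exists_seq_regNormal_of_mem_limNormal {Ω : ℕ → Set H} {z η : ℕ → H}
    (h : ∀ k, η k ∈ limNormal (Ω k) (z k)) :
    ∃ w ζ : ℕ → H, (∀ k, ζ k ∈ regNormal (Ω k) (w k)) ∧
      Tendsto (fun k => dist (z k) (w k)) atTop (𝓝 0) ∧
      Tendsto (fun k => dist (η k) (ζ k)) atTop (𝓝 0) := by
  have : ∀ k : ℕ, ∃ p : H × H, p.2 ∈ regNormal (Ω k) p.1 ∧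
      dist (z k) p.1 < 1 / (k + 1) ∧ dist (η k) p.2 < 1 / (k + 1) := by
    intro k
    obtain ⟨-, w, ζ, hw, hζ, hreg⟩ := h k
    obtain ⟨j, hwj, hζj⟩ := ((hw.eventually (ball_mem_nhds _ Nat.one_div_pos_of_nat)).and
      (hζ.eventually (ball_mem_nhds _ Nat.one_div_pos_of_nat))).exists
    exact ⟨(w j, ζ j), hreg j, by rwa [dist_comm], by rwa [dist_comm]⟩
  choose p hreg hw hζ using this
  have h0 : Tendsto (fun k : ℕ => 1 / ((k : ℝ) + 1)) atTop (𝓝 0) :=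
    tendsto_one_div_add_atTop_nhds_zero_nat
  exact ⟨fun k => (p k).1, fun k => (p k).2, hreg,
    squeeze_zero (fun _ => dist_nonneg) (fun k => (hw k).le) h0,
    squeeze_zero (fun _ => dist_nonneg) (fun k => (hζ k).le) h0⟩

theorem mem_limNormal_of_tendsto {Ω : Set H} (hΩ : IsClosed Ω) {z η : ℕ → H} {z₀ η₀ : H}
    (hz : Tendsto z atTop (𝓝 z₀)) (hη : Tendsto η atTop (𝓝 η₀))
    (h : ∀ k, η k ∈ limNormal Ω (z k)) : η₀ ∈ limNormal Ω z₀ := by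
  obtain ⟨w, ζ, hreg, hw, hζ⟩ := exists_seq_regNormal_of_mem_limNormal (Ω := fun _ => Ω) h
  exact ⟨hΩ.mem_of_tendsto hz (Eventually.of_forall fun k => (h k).1), w, ζ,
    hz.congr_dist hw, hη.congr_dist hζ, hreg⟩

theorem mem_limNormal_of_tendsto_epsNormal [ProperSpace H] {Ω : Set H} (hΩ : IsClosed Ω)
    {z η : ℕ → H} {ε : ℕ → ℝ} {z₀ η₀ : H} (hz : Tendsto z atTop (𝓝 z₀))
    (hη : Tendsto η atTop (𝓝 η₀)) (hε : Tendsto ε atTop (𝓝 0)) (hε0 : ∀ k, 0 ≤ ε k)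
    (h : ∀ᶠ k in atTop, η k ∈ epsNormal Ω (z k) (ε k)) : η₀ ∈ limNormal Ω z₀ := by
  have : ∀ k : ℕ, ∃ p : H × H, (η k ∈ epsNormal Ω (z k) (ε k) → p.2 ∈ regNormal Ω p.1) ∧
      dist (z k) p.1 ≤ 1 / (k + 1) ∧ dist (η k) p.2 ≤ 2 * ε k := by
    intro k
    by_cases hk : η k ∈ epsNormal Ω (z k) (ε k)
    · obtain ⟨w, ζ, hreg, hw, hζ⟩ :=
        exists_regNormal_near_of_mem_epsNormal hΩ (hε0 k) Nat.one_div_pos_of_nat hk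
      exact ⟨(w, ζ), fun _ => hreg, by rw [dist_comm, dist_eq_norm]; exact hw.le,
        by rwa [dist_comm, dist_eq_norm]⟩
    · exact ⟨(z k, η k), fun h => absurd h hk, by simp; positivity, by simpa using hε0 k⟩
  choose p hreg hw hζ using this
  refine mem_limNormal_of_eventually (hΩ.mem_of_tendsto hz (h.mono fun k hk => hk.1))
    (hz.congr_dist ?_) (hη.congr_dist ?_) (h.mono hreg)
  · exact squeeze_zero (fun _ => dist_nonneg) hw tendsto_one_div_add_atTop_nhds_zero_nat
  · exact squeeze_zero (fun _ => dist_nonneg) hζ (by simpa using hε.const_mul 2)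

end Normals

section Epigraph

theorem norm_pl2_zero {H : Type*} [NormedAddCommGroup H] (b : ℝ) : ‖pl2 (0 : H) b‖ = |b| := by
  simp [pl2]

theorem tendsto_pl2_s11 {H : Type*} [TopologicalSpace H] {u : ℕ → H} {v : ℕ → ℝ} {a : H} {b : ℝ}
    (hu : Tendsto u atTop (𝓝 a)) (hv : Tendsto v atTop (𝓝 b)) :
    Tendsto (fun k => pl2 (u k) (v k)) atTop (𝓝 (pl2 a b)) :=
  ((WithLp.prod_continuous_toLp 2 H ℝ).tendsto _).comp (hu.prodMk_nhds hv)

theorem isClosed_epigraphSet {H : Type*} [TopologicalSpace H] {φ : H → ℝ} (hφ : Continuous φ) :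
    IsClosed (epigraphSet φ) :=
  isClosed_le (hφ.comp (WithLp.continuous_fst 2 H ℝ)) (WithLp.continuous_snd 2 H ℝ)

variable {H : Type*} [NormedAddCommGroup H] [InnerProductSpace ℝ H]

/-- Adding a function that is `L`-calm at `y` to `φ` shifts the epigraph vertically, which
distorts distances near `(y, a)` by a factor at most `1 + L`. -/
theorem epsNormal_epigraphSet_add {φ e : H → ℝ} {y : H} {ζ : WithLp 2 (H × ℝ)} {a ε L : ℝ}
    (hε : 0 ≤ ε) (hL : 0 ≤ L) (he : ∀ᶠ u in 𝓝 y, |e u - e y| ≤ L * ‖u - y‖)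
    (hζ : ζ ∈ epsNormal (epigraphSet φ) (pl2 y a) ε) :
    ζ ∈ epsNormal (epigraphSet (φ + e)) (pl2 y (a + e y)) (ε * (1 + L) + ‖ζ‖ * L) := by
  obtain ⟨hya, hζ⟩ := hζ
  refine ⟨show φ y + e y ≤ a + e y by linarith [show φ y ≤ a from hya], ?_⟩
  obtain ⟨ρ, hρ, hρζ⟩ := Metric.eventually_nhds_iff.1 (eventually_nhdsWithin_iff.1 hζ)
  obtain ⟨r, hr, hre⟩ := Metric.eventually_nhds_iff.1 he
  refine eventually_nhdsWithin_iff.2 (Metric.eventually_nhds_iff.2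
    ⟨min r (ρ / (1 + L)), by positivity, fun w hw hwE => ?_⟩)
  rw [lt_min_iff, dist_eq_norm, lt_div_iff₀ (by positivity)] at hw
  set v := w - pl2 y (a + e y)
  set Δ := e w.fst - e y
  set w' := pl2 w.fst (w.snd - e w.fst)
  have hfst : ‖w.fst - y‖ ≤ ‖v‖ := WithLp.norm_fst_le (x := v)
  have hΔ : |Δ| ≤ L * ‖v‖ :=
    (hre (by rw [dist_eq_norm]; linarith)).trans (mul_le_mul_of_nonneg_left hfst hL)
  have hsplit : v = (w' - pl2 y a) + pl2 0 Δ := by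
    change pl2 (w.fst - y) (w.snd - (a + e y))
      = pl2 (w.fst - y + 0) (w.snd - e w.fst - a + (e w.fst - e y))
    rw [add_zero]
    congr 1
    ring
  have hw'E : w' ∈ epigraphSet φ :=
    show φ w.fst ≤ w.snd - e w.fst by linarith [show φ w.fst + e w.fst ≤ w.snd from hwE]
  have hw' : ‖w' - pl2 y a‖ ≤ (1 + L) * ‖v‖ := by
    calc ‖w' - pl2 y a‖ = ‖v - pl2 0 Δ‖ := by rw [hsplit, add_sub_cancel_right]
      _ ≤ ‖v‖ + |Δ| := (norm_sub_le _ _).trans_eq (by rw [norm_pl2_zero])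
      _ ≤ (1 + L) * ‖v‖ := by linarith
  have hmain := hρζ (by rw [dist_eq_norm]; linarith) hw'E
  calc ⟪ζ, v⟫ = ⟪ζ, w' - pl2 y a⟫ + ⟪ζ, pl2 0 Δ⟫ := by rw [hsplit, inner_add_right]
    _ ≤ ε * ‖w' - pl2 y a‖ + ‖ζ‖ * |Δ| :=
      add_le_add hmain ((real_inner_le_norm _ _).trans_eq (by rw [norm_pl2_zero]))
    _ ≤ ε * ((1 + L) * ‖v‖) + ‖ζ‖ * (L * ‖v‖) := by gcongr
    _ = (ε * (1 + L) + ‖ζ‖ * L) * ‖v‖ := by ring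

end Epigraph

theorem mem_limSubdiff_inner_of_tendsto {E G : Type*} [NormedAddCommGroup E]
    [InnerProductSpace ℝ E] [FiniteDimensional ℝ E] [NormedAddCommGroup G] [InnerProductSpace ℝ G]
    {F : E → G} (hF : LocallyLipschitz F) {x ξ : E} {lam : G} {xk ξk : ℕ → E} {lamk : ℕ → G}
    (hx : Tendsto xk atTop (𝓝 x)) (hlam : Tendsto lamk atTop (𝓝 lam))
    (hξ : Tendsto ξk atTop (𝓝 ξ)) (h : ∀ k, ξk k ∈ limSubdiff (fun y => ⟪lamk k, F y⟫) (xk k)) :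
    ξ ∈ limSubdiff (fun y => ⟪lam, F y⟫) x := by
  obtain ⟨K, U, hU, hKU⟩ := hF x
  obtain ⟨r, hr, hrU⟩ := Metric.mem_nhds_iff.1 hU
  obtain ⟨z, ζ, hreg, hz, hζ⟩ := exists_seq_regNormal_of_mem_limNormal h
  have hFc := hF.continuous
  replace hz : Tendsto z atTop (𝓝 (pl2 x ⟪lam, F x⟫)) :=
    (tendsto_pl2_s11 hx (hlam.inner ((hFc.tendsto x).comp hx))).congr_dist hz
  replace hζ : Tendsto ζ atTop (𝓝 (pl2 ξ (-1))) :=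
    (tendsto_pl2_s11 hξ tendsto_const_nhds).congr_dist hζ
  set e : ℕ → E → ℝ := fun k y => ⟪lam - lamk k, F y⟫
  set L : ℕ → ℝ := fun k => K * ‖lam - lamk k‖
  have hy : Tendsto (fun k => (z k).fst) atTop (𝓝 x) :=
    ((WithLp.continuous_fst 2 E ℝ).tendsto _).comp hz
  have hL : Tendsto L atTop (𝓝 0) := by
    simpa using ((tendsto_const_nhds (x := lam)).sub hlam).norm.const_mul (K : ℝ)
  have he : Tendsto (fun k => e k (z k).fst) atTop (𝓝 0) := by
    simpa using ((tendsto_const_nhds (x := lam)).sub hlam).inner ((hFc.tendsto x).comp hy)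
  refine mem_limNormal_of_tendsto_epsNormal (isClosed_epigraphSet (continuous_const.inner hFc))
    (z := fun k => pl2 (z k).fst ((z k).snd + e k (z k).fst)) ?_ hζ
    (ε := fun k => 1 / (k + 1) * (1 + L k) + ‖ζ k‖ * L k) ?_ (fun k => by positivity) ?_
  · have := tendsto_pl2_s11 hy ((((WithLp.continuous_snd 2 E ℝ).tendsto _).comp hz).add he)
    rwa [add_zero] at this
  · simpa using (tendsto_one_div_add_atTop_nhds_zero_nat.mul (tendsto_const_nhds.add hL)).add
      (hζ.norm.mul hL)
  · filter_upwards [hy.eventually (isOpen_ball.mem_nhds (mem_ball_self hr))] with k hk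
    have hsum : (fun y => ⟪lamk k, F y⟫) + e k = fun y => ⟪lam, F y⟫ := by
      ext y; simp [e, inner_sub_left]
    rw [← hsum]
    refine epsNormal_epigraphSet_add (by positivity) (by positivity) ?_
      (regNormal_subset_epsNormal (by positivity) (hreg k))
    filter_upwards [isOpen_ball.mem_nhds hk] with u hu
    calc |e k u - e k (z k).fst| = |⟪lam - lamk k, F u - F (z k).fst⟫| := by
          simp only [e, inner_sub_right]
      _ ≤ ‖lam - lamk k‖ * (K * ‖u - (z k).fst‖) :=
          (abs_real_inner_le_norm _ _).trans (by gcongr; exact hKU.norm_sub_le (hrU hu) (hrU hk))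
      _ = L k * ‖u - (z k).fst‖ := by ring

theorem stmt11_general {n l : ℕ}
    (f : Eu n → ℝ) (hf : ContDiff ℝ 1 f)
    (F : Eu n → Eu l)
    (hLip : LocallyLipschitz F)
    (Γ : Set (Eu l)) (hΓcl : IsClosed Γ)
    (x : Eu n)
    (xk : ℕ → Eu n) (lamk δk : ℕ → Eu l) (εk : ℕ → Eu n)
    (hAM : AMSeq f F Γ x xk lamk δk εk)
    (hbd : ∃ M : ℝ, ∀ k, ‖lamk k‖ ≤ M) :
    MStat f F Γ x := by
  obtain ⟨M, hM⟩ := hbd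
  obtain ⟨hsub, hnormal, hx, hδ, hε⟩ := hAM
  obtain ⟨lam, -, σ, hσ, hlam⟩ := (isCompact_closedBall (0 : Eu l) M).tendsto_subseq
    fun k => mem_closedBall_zero_iff.2 (hM k)
  have hxσ := hx.comp hσ.tendsto_atTop
  have hgrad : Continuous (gradient f) :=
    (InnerProductSpace.toDual ℝ (Eu n)).symm.continuous.comp (hf.continuous_fderiv one_ne_zero)
  refine ⟨lam, mem_limSubdiff_inner_of_tendsto hLip hxσ hlam ?_ fun k => hsub (σ k),
    mem_limNormal_of_tendsto hΓcl ?_ hlam fun k => hnormal (σ k)⟩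
  · simpa using (hε.comp hσ.tendsto_atTop).sub ((hgrad.tendsto x).comp hxσ)
  · simpa using ((hLip.continuous.tendsto x).comp hxσ).sub (hδ.comp hσ.tendsto_atTop)

/-- An AM-stationary point with a bounded multiplier sequence is M-stationary. -/
theorem stmt11 {n l : ℕ}
    (f : Eu n → ℝ) (hf : ContDiff ℝ 1 f)
    (F : Eu n → Eu l) (F' : Eu n → Eu n → Eu l)
    (hLip : LocallyLipschitz F) (hF' : IsDirDeriv F F')
    (Γ : Set (Eu l)) (hΓne : Γ.Nonempty) (hΓcl : IsClosed Γ)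
    (x : Eu n) (hfeas : F x ∈ Γ)
    (xk : ℕ → Eu n) (lamk δk : ℕ → Eu l) (εk : ℕ → Eu n)
    (hAM : AMSeq f F Γ x xk lamk δk εk)
    (hbd : ∃ M : ℝ, ∀ k, ‖lamk k‖ ≤ M) :
    MStat f F Γ x :=
  stmt11_general f hf F hLip Γ hΓcl x xk lamk δk εk hAM hbd
end
end
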